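/- arXiv:math/0610862 — 7 statements merged into one kernel-verified Lean document; each statement's English description precedes it below -/
import Mathlib

section
/- For every dimension d ≥ 2 the limit κ = lim_{n→∞} s_n^{1/n} exists (equivalently, n^{-1} log s_n converges), equals inf_{n≥1} s_n^{1/n}, and satisfies d ≤ κ ≤ 2d − 1. -/
/-
Cutting a walk of length m + n after its m-th step and translating the second piece back to the
origin is injective, so s_{m+n} ≤ s_m s_n, and Fekete's lemma for the subadditive sequence log s_n
gives the limit κ = inf s_n^{1/n}. Walks using only the d positive unit steps are self-avoiding,
so s_n ≥ d^n and κ ≥ d. A self-avoiding walk never steps back to the point it has just left, so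
every step after the first has at most 2d - 1 choices: s_{n+1} ≤ 2d (2d - 1)^n, and κ^n ≤ s_n
forces κ ≤ 2d - 1.
-/

open Filter

/-- The number of self-avoiding walks of length `n` on the lattice `ℤ^d`,
starting at the origin. -/
noncomputable def sawCount (d n : ℕ) : ℕ :=
  Nat.card {ω : Fin (n + 1) → (Fin d → ℤ) //
    Function.Injective ω ∧ ω 0 = 0 ∧
    ∀ i : Fin n, (∑ j, |ω i.succ j - ω i.castSucc j|) = 1}

open Topology Finset Function

lemma le_of_forall_pow_le_mul_pow {x c C : ℝ} (hc : 0 < c)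
    (h : ∀ n : ℕ, x ^ n ≤ C * c ^ n) : x ≤ c := by
  by_contra! hcx
  obtain ⟨n, hn⟩ := pow_unbounded_of_one_lt C ((one_lt_div hc).2 hcx)
  rw [div_pow, lt_div_iff₀ (pow_pos hc n)] at hn
  exact (h n).not_gt hn

theorem exists_tendsto_rpow_inv_isGLB_of_submultiplicative {a : ℕ → ℝ} {c : ℝ} (hc : 0 < c)
    (hca : ∀ n, c ^ n ≤ a n) (hmul : ∀ m n, a (m + n) ≤ a m * a n) :
    ∃ κ, Tendsto (fun n : ℕ => a n ^ (n : ℝ)⁻¹) atTop (𝓝 κ) ∧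
      IsGLB {x | ∃ n : ℕ, 1 ≤ n ∧ x = a n ^ (n : ℝ)⁻¹} κ := by
  have ha : ∀ n, 0 < a n := fun n => (pow_pos hc n).trans_le (hca n)
  set u : ℕ → ℝ := fun n => Real.log (a n)
  have hsub : Subadditive u := fun m n => by
    simpa only [u, Real.log_mul (ha m).ne' (ha n).ne'] using Real.log_le_log (ha _) (hmul m n)
  have hbdd : BddBelow (Set.range fun n => u n / n) := by
    refine ⟨min 0 (Real.log c), ?_⟩
    rintro _ ⟨n, rfl⟩
    rcases Nat.eq_zero_or_pos n with rfl | hn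
    · simp
    · refine min_le_of_right_le ((le_div_iff₀ (by positivity)).2 ?_)
      rw [mul_comm, ← Real.log_pow]
      exact Real.log_le_log (pow_pos hc n) (hca n)
  have hrpow : ∀ n : ℕ, a n ^ (n : ℝ)⁻¹ = Real.exp (u n / n) := fun n => by
    rw [Real.rpow_def_of_pos (ha n), div_eq_mul_inv]
  have hlim : Tendsto (fun n : ℕ => a n ^ (n : ℝ)⁻¹) atTop (𝓝 (Real.exp hsub.lim)) := by
    simp only [hrpow]
    exact (Real.continuous_exp.tendsto _).comp (hsub.tendsto_lim hbdd)
  refine ⟨_, hlim, ?_, fun b hb => ?_⟩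
  · rintro _ ⟨n, hn, rfl⟩
    rw [hrpow]
    exact Real.exp_le_exp.2 (hsub.lim_le_div hbdd (by omega))
  · exact ge_of_tendsto hlim (eventually_atTop.2 ⟨1, fun n hn => hb ⟨n, hn, rfl⟩⟩)

lemma card_subtype_prod_le_of_card_fiber_le {α β : Type*} [Finite α] {p : α → β → Prop} {k : ℕ}
    [∀ a, Finite {b // p a b}] (h : ∀ a, Nat.card {b // p a b} ≤ k) :
    Nat.card {x : α × β // p x.1 x.2} ≤ Nat.card α * k := by
  have := Fintype.ofFinite α
  rw [Nat.card_congr (Equiv.subtypeProdEquivSigmaSubtype p), Nat.card_sigma,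
    Nat.card_eq_fintype_card (α := α)]
  simpa using Finset.sum_le_card_nsmul univ _ k fun a _ => h a

section SelfAvoidingWalk

def unitVectors (d : ℕ) : Finset (Fin d → ℤ) :=
  (univ ×ˢ {1, -1}).image fun p => Pi.single p.1 p.2

variable {d : ℕ}

lemma card_unitVectors_le : (unitVectors d).card ≤ 2 * d := by
  calc (unitVectors d).card ≤ (univ ×ˢ ({1, -1} : Finset ℤ)).card := card_image_le
    _ = 2 * d := by simp [mul_comm]

lemma mem_unitVectors {v : Fin d → ℤ} : v ∈ unitVectors d ↔ ∑ j, |v j| = 1 := by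
  constructor
  · simp only [unitVectors, mem_image, mem_product, mem_univ, true_and]
    rintro ⟨⟨j, s⟩, hs, rfl⟩
    simp only [mem_insert, mem_singleton] at hs
    rcases hs with rfl | rfl <;> simp [Pi.single_apply, apply_ite (abs : ℤ → ℤ)]
  · intro hv
    obtain ⟨j, hj⟩ : ∃ j, v j ≠ 0 := by
      by_contra! h
      simp [h] at hv
    have hsplit := add_sum_erase univ (fun k => |v k|) (mem_univ j)
    have hrest_nonneg := sum_nonneg fun k (_ : k ∈ univ.erase j) => abs_nonneg (v k)
    have hj1 : |v j| = 1 := by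
      have := Int.one_le_abs hj
      omega
    have hrest : ∀ k ≠ j, v k = 0 := fun k hk => abs_eq_zero.1 <|
      (sum_eq_zero_iff_of_nonneg fun k _ => abs_nonneg (v k)).1 (by omega) k
        (mem_erase.2 ⟨hk, mem_univ k⟩)
    refine mem_image.2 ⟨(j, v j), by simpa [abs_eq] using hj1, ?_⟩
    ext k
    by_cases hk : k = j
    · subst hk; simp
    · simp [hk, hrest k hk]

def IsSAW (d n : ℕ) (ω : Fin (n + 1) → Fin d → ℤ) : Prop :=
  Injective ω ∧ ω 0 = 0 ∧ ∀ i : Fin n, ∑ j, |ω i.succ j - ω i.castSucc j| = 1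

abbrev SAW (d n : ℕ) := {ω : Fin (n + 1) → Fin d → ℤ // IsSAW d n ω}

lemma sawCount_eq_card (d n : ℕ) : sawCount d n = Nat.card (SAW d n) := rfl

namespace SAW

variable {m n : ℕ}

def take (ω : SAW d (m + n)) : SAW d m :=
  ⟨fun i => ω.1 ⟨i, by omega⟩, fun i i' h => Fin.ext (by simpa using congrArg Fin.val (ω.2.1 h)),
    ω.2.2.1, fun i => ω.2.2.2 ⟨i, by omega⟩⟩

def drop (ω : SAW d (m + n)) : SAW d n :=
  ⟨fun i => ω.1 ⟨m + i, by omega⟩ - ω.1 ⟨m, by omega⟩,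
    fun i i' h => Fin.ext (by simpa using congrArg Fin.val (ω.2.1 (sub_left_inj.1 h))),
    by simp, fun i => by
      simp only [Pi.sub_apply, sub_sub_sub_cancel_right]
      exact ω.2.2.2 ⟨m + i, by omega⟩⟩

lemma take_drop_injective : Injective fun ω : SAW d (m + n) => (ω.take, ω.drop) := by
  intro ω ω' h
  obtain ⟨htake, hdrop⟩ := Prod.ext_iff.1 h
  have htake := congrArg Subtype.val htake
  have hdrop := congrArg Subtype.val hdrop
  have hm : ω.1 ⟨m, by omega⟩ = ω'.1 ⟨m, by omega⟩ := congrFun htake (Fin.last m)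
  ext1
  funext ⟨i, hi⟩
  rcases le_or_gt i m with him | hmi
  · exact congrFun htake ⟨i, by omega⟩
  · obtain ⟨k, rfl⟩ : ∃ k, i = m + k := ⟨i - m, by omega⟩
    simpa [drop, hm] using congrFun hdrop ⟨k, by omega⟩

lemma apply_one_mem_unitVectors (ω : SAW d 1) : ω.1 1 ∈ unitVectors d :=
  mem_unitVectors.2 (by simpa [ω.2.2.1] using ω.2.2.2 0)

lemma apply_one_injective : Injective fun ω : SAW d 1 => ω.1 1 := by
  intro ω ω' h
  ext1
  funext i
  fin_cases i
  · simp [ω.2.2.1, ω'.2.2.1]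
  · exact h

instance : Finite (SAW d 1) :=
  Finite.of_injective (fun ω => (⟨ω.1 1, apply_one_mem_unitVectors ω⟩ : unitVectors d))
    fun _ _ h => apply_one_injective (congrArg Subtype.val h)

instance instFinite : ∀ n, Finite (SAW d n)
  | 0 => Finite.of_injective (fun _ : SAW d 0 => ()) fun ω ω' _ => Subtype.ext <| funext fun i => by
      rw [Fin.fin_one_eq_zero i, ω.2.2.1, ω'.2.2.1]
  | n + 1 =>
    have := instFinite n
    Finite.of_injective _ (take_drop_injective (m := n) (n := 1))

lemma card_one_le : Nat.card (SAW d 1) ≤ 2 * d :=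
  calc Nat.card (SAW d 1) ≤ Nat.card (unitVectors d) :=
        Nat.card_le_card_of_injective (fun ω => ⟨ω.1 1, apply_one_mem_unitVectors ω⟩)
          fun _ _ h => apply_one_injective (congrArg Subtype.val h)
    _ ≤ 2 * d := (Nat.card_eq_finsetCard _).trans_le card_unitVectors_le

lemma card_apply_one_ne_le {u : Fin d → ℤ} (hu : u ∈ unitVectors d) :
    Nat.card {ω : SAW d 1 // ω.1 1 ≠ u} ≤ 2 * d - 1 :=
  calc Nat.card {ω : SAW d 1 // ω.1 1 ≠ u} ≤ Nat.card ((unitVectors d).erase u) :=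
        Nat.card_le_card_of_injective
          (fun ω => ⟨ω.1.1 1, mem_erase.2 ⟨ω.2, apply_one_mem_unitVectors ω.1⟩⟩)
          fun _ _ h => Subtype.ext (apply_one_injective (congrArg Subtype.val h))
    _ ≤ 2 * d - 1 := by
        rw [Nat.card_eq_finsetCard, card_erase_of_mem hu]
        exact Nat.sub_le_sub_right card_unitVectors_le 1

def ofDirections (f : Fin n → Fin d) : Fin (n + 1) → Fin d → ℤ :=
  Fin.partialSum fun k => Pi.single (f k) 1

lemma sum_ofDirections (f : Fin n → Fin d) (i : Fin (n + 1)) :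
    ∑ j, ofDirections f i j = i := by
  induction i using Fin.induction with
  | zero => simp [ofDirections]
  | succ i ih =>
    simp only [ofDirections] at ih ⊢
    simp [Fin.partialSum_succ, sum_add_distrib, ih]

lemma ofDirections_succ_sub (f : Fin n → Fin d) (i : Fin n) :
    ofDirections f i.succ - ofDirections f i.castSucc = Pi.single (f i) 1 := by
  simp [ofDirections, Fin.partialSum_succ]

lemma isSAW_ofDirections (f : Fin n → Fin d) : IsSAW d n (ofDirections f) := by
  refine ⟨fun i i' h => ?_, by simp [ofDirections], fun i => ?_⟩
  · have := sum_ofDirections f i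
    rw [h, sum_ofDirections] at this
    exact Fin.ext (by exact_mod_cast this.symm)
  · simp [← Pi.sub_apply, ofDirections_succ_sub, Pi.single_apply, apply_ite (abs : ℤ → ℤ)]

lemma ofDirections_injective : Injective (ofDirections : (Fin n → Fin d) → _) := by
  intro f g h
  funext i
  have := ofDirections_succ_sub f i
  rw [h, ofDirections_succ_sub] at this
  by_contra hne
  simpa [Pi.single_apply, Ne.symm hne] using congrFun this (g i)

end SAW

open SAW

lemma pow_le_sawCount (n : ℕ) : d ^ n ≤ sawCount d n := by
  simpa [sawCount_eq_card] using
    Nat.card_le_card_of_injective (fun f => (⟨_, isSAW_ofDirections f⟩ : SAW d n))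
    fun f g h => ofDirections_injective (congrArg Subtype.val h)

lemma sawCount_add_le (m n : ℕ) : sawCount d (m + n) ≤ sawCount d m * sawCount d n := by
  simpa [sawCount_eq_card, Nat.card_prod] using
    Nat.card_le_card_of_injective _ (take_drop_injective (d := d) (m := m) (n := n))

lemma sawCount_add_two_le (n : ℕ) : sawCount d (n + 2) ≤ sawCount d (n + 1) * (2 * d - 1) := by
  let backStep (p : SAW d (n + 1)) : Fin d → ℤ := p.1 ⟨n, by omega⟩ - p.1 (Fin.last (n + 1))
  have hback (p : SAW d (n + 1)) : backStep p ∈ unitVectors d := by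
    rw [mem_unitVectors, ← p.2.2.2 (Fin.last n)]
    exact sum_congr rfl fun j _ => abs_sub_comm _ _
  calc sawCount d (n + 2)
      ≤ Nat.card {x : SAW d (n + 1) × SAW d 1 // x.2.1 1 ≠ backStep x.1} :=
        Nat.card_le_card_of_injective
          (fun ω : SAW d (n + 1 + 1) => ⟨(ω.take, ω.drop), fun h =>
            absurd (ω.2.1 (sub_left_inj.1 h)) (by simp [Fin.ext_iff]; omega)⟩)
          fun _ _ h => take_drop_injective (m := n + 1) (n := 1) (congrArg Subtype.val h)
    _ ≤ sawCount d (n + 1) * (2 * d - 1) :=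
        card_subtype_prod_le_of_card_fiber_le fun p => card_apply_one_ne_le (hback p)

lemma sawCount_succ_le (n : ℕ) : sawCount d (n + 1) ≤ 2 * d * (2 * d - 1) ^ n := by
  induction n with
  | zero => simpa [sawCount_eq_card] using card_one_le
  | succ n ih =>
    calc sawCount d (n + 2) ≤ sawCount d (n + 1) * (2 * d - 1) := sawCount_add_two_le n
      _ ≤ 2 * d * (2 * d - 1) ^ n * (2 * d - 1) := by gcongr
      _ = 2 * d * (2 * d - 1) ^ (n + 1) := by ring

end SelfAvoidingWalk

/-- For every `d ≥ 2` the connective constant `κ = lim_{n→∞} s_n^{1/n}` exists,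
equals `inf_{n ≥ 1} s_n^{1/n}`, and satisfies `d ≤ κ ≤ 2d - 1`. -/
theorem connective_constant_exists (d : ℕ) (hd : 2 ≤ d) :
    ∃ κ : ℝ,
      Tendsto (fun n : ℕ => (sawCount d n : ℝ) ^ ((n : ℝ)⁻¹)) atTop (nhds κ) ∧
      IsGLB {x : ℝ | ∃ n : ℕ, 1 ≤ n ∧ x = (sawCount d n : ℝ) ^ ((n : ℝ)⁻¹)} κ ∧
      (d : ℝ) ≤ κ ∧ κ ≤ 2 * d - 1 := by
  have hd' : (2 : ℝ) ≤ d := by exact_mod_cast hd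
  obtain ⟨κ, hlim, hglb⟩ := exists_tendsto_rpow_inv_isGLB_of_submultiplicative
    (a := fun n => (sawCount d n : ℝ)) (by linarith)
    (fun n => by exact_mod_cast pow_le_sawCount n) fun m n => by exact_mod_cast sawCount_add_le m n
  have le_rpow_iff {x : ℝ} (hx : 0 ≤ x) {n : ℕ} (hn : 1 ≤ n) :
      x ≤ (sawCount d n : ℝ) ^ (n : ℝ)⁻¹ ↔ x ^ n ≤ sawCount d n := by
    rw [Real.le_rpow_inv_iff_of_pos hx (Nat.cast_nonneg _) (by positivity), Real.rpow_natCast]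
  have hdκ : (d : ℝ) ≤ κ := hglb.2 fun _ ⟨n, hn, hx⟩ =>
    hx ▸ (le_rpow_iff (by linarith) hn).2 (by exact_mod_cast pow_le_sawCount n)
  refine ⟨κ, hlim, hglb, hdκ, le_of_forall_pow_le_mul_pow (C := 2 * d) (by linarith) fun n => ?_⟩
  have hcast : ((2 * d - 1 : ℕ) : ℝ) = 2 * d - 1 := by rw [Nat.cast_sub (by omega)]; push_cast; ring
  calc κ ^ n ≤ κ ^ (n + 1) := pow_le_pow_right₀ (by linarith) n.le_succ
    _ ≤ sawCount d (n + 1) :=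
        (le_rpow_iff (by linarith) (by omega)).1 (hglb.1 ⟨n + 1, by omega, rfl⟩)
    _ ≤ ((2 * d * (2 * d - 1) ^ n : ℕ) : ℝ) := by exact_mod_cast sawCount_succ_le n
    _ = 2 * d * (2 * d - 1) ^ n := by rw [Nat.cast_mul, Nat.cast_pow, hcast]; push_cast; ring
end

section
/- (Hammersley, via graphical duality / the Peierls argument) For bond percolation on the square lattice ℤ², there exists p < 1 such that under P_p the open cluster of the origin is infinite with strictly positive probability; that is, the critical probability satisfies p_c < 1. -/
open MeasureTheory ProbabilityTheory Filter

/-- Edges of the nearest-neighbour lattice `ℤ²`: the edge `(x, j)` joins `x`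
to `x + e_j`. -/
abbrev latticeEdge (d : ℕ) := (Fin d → ℤ) × Fin d

/-- Two vertices are joined by an open edge in the bond configuration `ω`. -/
def openAdj {d : ℕ} (ω : latticeEdge d → Bool) (a b : Fin d → ℤ) : Prop :=
  (∃ j, b = a + Pi.single j 1 ∧ ω (a, j) = true) ∨
  (∃ j, a = b + Pi.single j 1 ∧ ω (b, j) = true)

/-- The open cluster of the origin: all vertices joined to the origin by a path
of open edges. -/
def bondCluster {d : ℕ} (ω : latticeEdge d → Bool) : Set (Fin d → ℤ) :=
  {y | Relation.ReflTransGen (openAdj ω) 0 y}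

/-!
Peierls' argument. Orient every boundary edge of a finite set `C ⊆ ℤ²` from `C` outwards; the
dual edges crossing them form closed dual contours, obtained as the orbits of the permutation that
follows the boundary with `C` on the left. The unit flow from the origin down the lower half-axis
`{0} × (-∞, 0]` has divergence `δ₀`, so if `0 ∈ C` its flux out of `C` is `1`, and some contour
crosses the lower half-axis a nonzero number of times. Such a contour passes through a dual vertex
`(0, -(m + 1))`; since it crosses the whole axis zero times in total, it also crosses the upper
half-axis, so its length `n` exceeds `m`. When `C` is the open cluster of the origin, all the
edges the contour crosses are closed. Encoding the contour by `m` and its `n` step directions,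
`P_p(C finite) ≤ ∑_{m < n} 4ⁿ (1 - p)ⁿ`, which is `4 / 9` for `p = 15 / 16`.
-/

open Finset Function
open scoped ENNReal

namespace Function.IsPeriodicPt

variable {α : Type*} {f : α → α} {a : α} {P : ℕ}

lemma sum_range_mul {M : Type*} [AddCommMonoid M] (h : IsPeriodicPt f P a) (g : α → M)
    (t : ℕ) : ∑ i ∈ range (t * P), g (f^[i] a) = t • ∑ i ∈ range P, g (f^[i] a) := by
  induction t with
  | zero => simp
  | succ t ih =>
    rw [Nat.succ_mul, sum_range_add, ih, succ_nsmul]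
    congr 1
    refine sum_congr rfl fun i _ => ?_
    rw [add_comm, iterate_add_apply, (h.const_mul t).eq]

lemma sum_range_iterate {M : Type*} [AddCancelCommMonoid M] (h : IsPeriodicPt f P a)
    (g : α → M) (j : ℕ) :
    ∑ i ∈ range P, g (f^[i] (f^[j] a)) = ∑ i ∈ range P, g (f^[i] a) := by
  induction j generalizing a with
  | zero => rfl
  | succ j ih =>
    rw [iterate_succ_apply, ih h.apply]
    have hshift := sum_range_succ' (fun i => g (f^[i] a)) P
    rw [sum_range_succ, h.eq] at hshift
    simpa only [iterate_succ_apply] using (add_right_cancel hshift).symm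

end Function.IsPeriodicPt

/-- Averaging over `orderOf τ` iterates writes `(orderOf τ) • ∑ a, g a` as a sum of multiples of
orbit sums. -/
lemma Equiv.Perm.exists_sum_range_minimalPeriod_ne_zero {α M : Type*} [Fintype α]
    [AddCommGroup M] [IsAddTorsionFree M] (τ : Equiv.Perm α) (g : α → M) (h : ∑ a, g a ≠ 0) :
    ∃ a, ∑ i ∈ range (minimalPeriod τ a), g (τ^[i] a) ≠ 0 := by
  by_contra! horbit
  have hper : ∀ a, IsPeriodicPt τ (orderOf τ) a := fun a => by
    rw [IsPeriodicPt, IsFixedPt, Equiv.Perm.iterate_eq_pow, pow_orderOf_eq_one]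
    rfl
  have hvanish : ∀ a, ∑ i ∈ range (orderOf τ), g (τ^[i] a) = 0 := fun a => by
    obtain ⟨t, ht⟩ := (hper a).minimalPeriod_dvd
    rw [ht, mul_comm, (isPeriodicPt_minimalPeriod τ a).sum_range_mul, horbit a, smul_zero]
  refine h ((nsmul_eq_zero_iff_right (orderOf_pos τ).ne').mp ?_)
  calc orderOf τ • ∑ a, g a = ∑ i ∈ range (orderOf τ), ∑ a, g a := by
        rw [sum_const, card_range]
    _ = ∑ i ∈ range (orderOf τ), ∑ a, g (τ^[i] a) := sum_congr rfl fun i _ => by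
        rw [Equiv.Perm.iterate_eq_pow, Equiv.sum_comp]
    _ = 0 := by
        rw [sum_comm]
        exact sum_eq_zero fun a _ => hvanish a

lemma ENNReal.tsum_tsum_pow_add_add_one (x : ℝ≥0∞) :
    ∑' (m : ℕ) (k : ℕ), x ^ (m + k + 1) = x * (1 - x)⁻¹ ^ 2 := by
  simp only [pow_add, pow_one, ENNReal.tsum_mul_left, ENNReal.tsum_mul_right,
    ENNReal.tsum_geometric]
  ring

lemma MeasureTheory.measure_pos_of_measure_compl_lt_one {Ω : Type*} [MeasurableSpace Ω]
    {μ : Measure Ω} [IsProbabilityMeasure μ] {A : Set Ω} (h : μ Aᶜ < 1) : 0 < μ A := by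
  refine pos_iff_ne_zero.mpr fun h0 => h.not_ge ?_
  simpa [h0] using measure_union_le (μ := μ) A Aᶜ

namespace Peierls

local notation "ℤ²" => Fin 2 → ℤ

/-! A dart `(x, s) : ℤ² × Fin 4` is the edge from `x` to `x + dir s`. The dual vertex `u` stands
for the unit square with lower-left corner `u`; the dual edge crossing the dart `(x, s)` with `x`
on its left runs from `x + corner s` to `x + corner (s + 1) = x + corner s + dir (s + 1)`. -/

def dir : Fin 4 → ℤ² := ![![1, 0], ![0, 1], ![-1, 0], ![0, -1]]

def corner : Fin 4 → ℤ² := ![![0, -1], ![0, 0], ![-1, 0], ![-1, -1]]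

lemma dir_injective : Injective dir := by
  decide

lemma dir_add_two (s : Fin 4) : dir (s + 2) = -dir s := by
  fin_cases s <;> decide

lemma dir_sub_one_sub_one (s : Fin 4) : dir (s - 1 - 1) = -dir s := by
  fin_cases s <;> decide

lemma add_dir_add_one_add_dir_sub_one (y : ℤ²) (s : Fin 4) :
    y + dir (s + 1) + dir (s - 1) = y := by
  rw [add_assoc, add_eq_left]
  fin_cases s <;> decide

lemma dir_apply_one_le (s : Fin 4) : dir s 1 ≤ 1 := by
  fin_cases s <;> decide

lemma corner_add_one (s : Fin 4) : corner (s + 1) = corner s + dir (s + 1) := by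
  fin_cases s <;> decide

lemma corner_sub_one (s : Fin 4) : corner (s - 1) = corner s - dir s := by
  fin_cases s <;> decide

def dualTail (e : ℤ² × Fin 4) : ℤ² := e.1 + corner e.2

def dualHead (e : ℤ² × Fin 4) : ℤ² := dualTail e + dir (e.2 + 1)

def boundary (C : Finset ℤ²) : Finset (ℤ² × Fin 4) :=
  (C ×ˢ univ).filter fun e => e.1 + dir e.2 ∉ C

lemma mem_boundary {C : Finset ℤ²} {x : ℤ²} {s : Fin 4} :
    (x, s) ∈ boundary C ↔ x ∈ C ∧ x + dir s ∉ C := by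
  simp [boundary]

/-- The dual contour keeps `C` on its left and turns right if it can, else goes straight on,
else turns left. -/
def boundarySucc (C : Finset ℤ²) : ℤ² × Fin 4 → ℤ² × Fin 4
  | (x, s) =>
    if x + dir s + dir (s + 1) ∈ C then (x + dir s + dir (s + 1), s - 1)
    else if x + dir (s + 1) ∈ C then (x + dir (s + 1), s)
    else (x, s + 1)

def boundaryPred (C : Finset ℤ²) : ℤ² × Fin 4 → ℤ² × Fin 4
  | (x, s) =>
    if x + dir s + dir (s - 1) ∈ C then (x + dir s + dir (s - 1), s + 1)
    else if x + dir (s - 1) ∈ C then (x + dir (s - 1), s)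
    else (x, s - 1)

variable {C : Finset ℤ²}

lemma boundarySucc_mem {e : ℤ² × Fin 4} (he : e ∈ boundary C) :
    boundarySucc C e ∈ boundary C := by
  obtain ⟨x, s⟩ := e
  rw [mem_boundary] at he
  simp only [boundarySucc]
  split_ifs with h₁ h₂ <;> rw [mem_boundary]
  · rw [add_dir_add_one_add_dir_sub_one]
    exact ⟨h₁, he.2⟩
  · exact ⟨h₂, by rwa [add_right_comm]⟩
  · exact ⟨he.1, h₂⟩

lemma boundaryPred_boundarySucc {e : ℤ² × Fin 4} (he : e ∈ boundary C) :
    boundaryPred C (boundarySucc C e) = e := by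
  obtain ⟨x, s⟩ := e
  rw [mem_boundary] at he
  simp only [boundarySucc]
  split_ifs with h₁ h₂ <;> simp only [boundaryPred, sub_add_cancel, add_sub_cancel_right]
  · rw [add_dir_add_one_add_dir_sub_one, dir_sub_one_sub_one, add_neg_cancel_right,
      if_pos he.1]
  · rw [add_right_comm x, add_dir_add_one_add_dir_sub_one, add_dir_add_one_add_dir_sub_one,
      if_neg he.2, if_pos he.1]
  · rw [add_right_comm x, if_neg h₁, if_neg he.2]

lemma dualTail_boundarySucc (e : ℤ² × Fin 4) : dualTail (boundarySucc C e) = dualHead e := by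
  obtain ⟨x, s⟩ := e
  simp only [boundarySucc, dualHead, dualTail]
  split_ifs
  · ext i
    simp only [corner_sub_one, Pi.add_apply, Pi.sub_apply]
    ring
  · rw [add_right_comm]
  · rw [corner_add_one, add_assoc]

/-- Darts pointing west or south are stored at their head. -/
def toEdge : ℤ² × Fin 4 → latticeEdge 2
  | (x, s) => (x + ![0, 0, dir 2, dir 3] s, ![0, 1, 0, 1] s)

def Joins (E : latticeEdge 2) (a b : ℤ²) : Prop :=
  a = E.1 ∧ b = E.1 + Pi.single E.2 1

lemma Joins.unique {E : latticeEdge 2} {a b a' b' : ℤ²} (h : Joins E a b)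
    (h' : Joins E a' b') : a = a' ∧ b = b' :=
  ⟨h.1.trans h'.1.symm, h.2.trans h'.2.symm⟩

lemma Joins.openAdj {ω : latticeEdge 2 → Bool} {E : latticeEdge 2} {a b : ℤ²}
    (h : Joins E a b) (hE : ω E = true) : openAdj ω a b ∧ openAdj ω b a := by
  obtain ⟨rfl, rfl⟩ := h
  exact ⟨Or.inl ⟨E.2, rfl, hE⟩, Or.inr ⟨E.2, rfl, hE⟩⟩

lemma toEdge_joins (x : ℤ²) (s : Fin 4) :
    Joins (toEdge (x, s)) x (x + dir s) ∨ Joins (toEdge (x, s)) (x + dir s) x := by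
  fin_cases s
  · left; exact ⟨by simp [toEdge], by simp [toEdge]; decide⟩
  · left; exact ⟨by simp [toEdge], by simp [toEdge]; decide⟩
  · right; exact ⟨by simp [toEdge], by simp [toEdge, add_assoc]; decide⟩
  · right; exact ⟨by simp [toEdge], by simp [toEdge, add_assoc]; decide⟩

lemma toEdge_injOn_boundary : Set.InjOn toEdge (boundary C) := by
  rintro ⟨x, s⟩ he ⟨x', s'⟩ he' h
  rw [mem_coe, mem_boundary] at he he'
  rcases toEdge_joins x s with h₁ | h₁ <;> rcases toEdge_joins x' s' with h₂ | h₂ <;>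
    rw [h] at h₁
  · obtain ⟨rfl, h⟩ := h₁.unique h₂
    rw [dir_injective (add_left_cancel h)]
  · obtain ⟨-, hx'⟩ := h₁.unique h₂
    exact (he.2 (hx' ▸ he'.1)).elim
  · obtain ⟨hx', -⟩ := h₁.unique h₂
    exact (he.2 (hx' ▸ he'.1)).elim
  · obtain ⟨h, rfl⟩ := h₁.unique h₂
    rw [dir_injective (add_left_cancel h)]

lemma toEdge_eq_false_of_mem_boundary {ω : latticeEdge 2 → Bool}
    (hC : (C : Set ℤ²) = bondCluster ω) {e : ℤ² × Fin 4} (he : e ∈ boundary C) :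
    ω (toEdge e) = false := by
  obtain ⟨x, s⟩ := e
  rw [mem_boundary, ← mem_coe, ← mem_coe, hC] at he
  rw [← Bool.not_eq_true]
  intro hopen
  have hadj : openAdj ω x (x + dir s) := by
    rcases toEdge_joins x s with h | h
    exacts [(h.openAdj hopen).1, (h.openAdj hopen).2]
  exact he.2 (Relation.ReflTransGen.tail he.1 hadj)

def rightHalf (u : ℤ²) : ℤ := if 0 ≤ u 0 then 1 else 0

def axisCrossing (e : ℤ² × Fin 4) : ℤ := rightHalf (dualHead e) - rightHalf (dualTail e)

def lowerRayCrossing (e : ℤ² × Fin 4) : ℤ := if dualTail e 1 < 0 then axisCrossing e else 0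

lemma lowerRayCrossing_reverse (x : ℤ²) (s : Fin 4) :
    lowerRayCrossing (x + dir s, s + 2) = -lowerRayCrossing (x, s) := by
  fin_cases s <;>
    simp [lowerRayCrossing, axisCrossing, rightHalf, dualHead, dualTail, dir, corner,
      Matrix.vecHead, Matrix.vecTail] <;>
    split_ifs <;> omega

lemma sum_lowerRayCrossing (x : ℤ²) :
    ∑ s, lowerRayCrossing (x, s) = if x = 0 then 1 else 0 := by
  simp [Fin.sum_univ_four, lowerRayCrossing, axisCrossing, rightHalf, dualHead, dualTail, dir,
    corner, funext_iff, Fin.forall_fin_two]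
  split_ifs <;> omega

lemma lowerRay_of_lowerRayCrossing_ne_zero {e : ℤ² × Fin 4} (h : lowerRayCrossing e ≠ 0) :
    (dualTail e 0 = 0 ∧ dualTail e 1 < 0) ∨ (dualHead e 0 = 0 ∧ dualHead e 1 < 0) := by
  obtain ⟨x, s⟩ := e
  fin_cases s <;>
    simp [lowerRayCrossing, axisCrossing, rightHalf, dualHead, dualTail, dir, corner,
      Matrix.vecHead, Matrix.vecTail] at h ⊢ <;>
    split_ifs at h <;> omega

/-- Darts with both endpoints in `C` cancel against their reversals. -/
lemma sum_boundary_eq_sum_darts {M : Type*} [AddCommGroup M] (C : Finset ℤ²)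
    (φ : ℤ² × Fin 4 → M) (hφ : ∀ x s, φ (x + dir s, s + 2) = -φ (x, s)) :
    ∑ e ∈ boundary C, φ e = ∑ x ∈ C, ∑ s, φ (x, s) := by
  have hs : ∀ s : Fin 4, s + 2 + 2 = s ∧ s + 2 ≠ s := by decide
  have hinterior : ∑ e ∈ (C ×ˢ univ).filter (fun e => e.1 + dir e.2 ∈ C), φ e = 0 := by
    refine sum_involution (fun e _ => (e.1 + dir e.2, e.2 + 2)) (fun e _ => ?_)
      (fun e _ _ => ?_) (fun e he => ?_) (fun e _ => ?_)
    · rw [hφ, add_neg_cancel]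
    · simp [Prod.ext_iff, (hs e.2).2]
    · simp only [mem_filter, mem_product, mem_univ, and_true] at he ⊢
      rw [dir_add_two, add_neg_cancel_right]
      exact ⟨he.2, he.1⟩
    · simp [dir_add_two, (hs e.2).1]
  rw [← sum_product, ← sum_filter_add_sum_filter_not (C ×ˢ univ) (fun e => e.1 + dir e.2 ∈ C),
    hinterior, zero_add, boundary]

lemma sum_boundary_lowerRayCrossing (h0 : 0 ∈ C) :
    ∑ e ∈ boundary C, lowerRayCrossing e = 1 := by
  simp [sum_boundary_eq_sum_darts C _ lowerRayCrossing_reverse, sum_lowerRayCrossing, h0]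

noncomputable def boundaryPerm (C : Finset ℤ²) : Equiv.Perm (boundary C) :=
  Equiv.ofBijective (fun e => ⟨boundarySucc C e, boundarySucc_mem e.2⟩) <|
    Finite.injective_iff_bijective.mp fun e e' h => Subtype.ext <| by
      rw [← boundaryPred_boundarySucc e.2, ← boundaryPred_boundarySucc e'.2]
      exact congrArg (fun d => boundaryPred C d.1) h

noncomputable def contour (e : boundary C) (k : ℕ) : ℤ² × Fin 4 := (boundaryPerm C)^[k] e

noncomputable def contourLength (e : boundary C) : ℕ := minimalPeriod (boundaryPerm C) e

/-- The winding number of the contour through `e` around the origin, counted as signed crossings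
of the lower half-axis. -/
noncomputable def windingNumber (e : boundary C) : ℤ :=
  ∑ i ∈ range (contourLength e), lowerRayCrossing (contour e i)

lemma contour_mem (e : boundary C) (k : ℕ) : contour e k ∈ boundary C :=
  ((boundaryPerm C)^[k] e).2

lemma dualTail_contour_succ (e : boundary C) (k : ℕ) :
    dualTail (contour e (k + 1)) = dualHead (contour e k) := by
  rw [contour, iterate_succ_apply']
  exact dualTail_boundarySucc _

lemma contour_injOn (e : boundary C) : Set.InjOn (contour e) (Set.Iio (contourLength e)) :=
  fun _ hi _ hj h => iterate_injOn_Iio_minimalPeriod hi hj (Subtype.ext h)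

lemma windingNumber_iterate (e : boundary C) (j : ℕ) :
    windingNumber ((boundaryPerm C)^[j] e) = windingNumber e := by
  rw [windingNumber, contourLength,
    minimalPeriod_apply_iterate ((boundaryPerm C).injective.mem_periodicPts e)]
  exact (isPeriodicPt_minimalPeriod _ e).sum_range_iterate (fun e => lowerRayCrossing e) j

lemma sum_axisCrossing_contour (e : boundary C) :
    ∑ i ∈ range (contourLength e), axisCrossing (contour e i) = 0 := by
  have htel : ∀ i, axisCrossing (contour e i) =
      rightHalf (dualTail (contour e (i + 1))) - rightHalf (dualTail (contour e i)) := fun i => by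
    rw [dualTail_contour_succ, axisCrossing]
  rw [sum_congr rfl fun i _ => htel i, sum_range_sub (fun i => rightHalf (dualTail (contour e i))),
    contour, contourLength, (isPeriodicPt_minimalPeriod _ e).eq, sub_eq_zero]
  rfl

lemma exists_windingNumber_ne_zero (h0 : 0 ∈ C) : ∃ e : boundary C, windingNumber e ≠ 0 := by
  refine (boundaryPerm C).exists_sum_range_minimalPeriod_ne_zero (fun e => lowerRayCrossing e) ?_
  rw [sum_coe_sort (boundary C) lowerRayCrossing, sum_boundary_lowerRayCrossing h0]
  exact one_ne_zero

lemma exists_windingNumber_ne_zero_lowerRay (h0 : 0 ∈ C) :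
    ∃ e : boundary C, windingNumber e ≠ 0 ∧ dualTail e 0 = 0 ∧ dualTail e 1 < 0 := by
  obtain ⟨a, ha⟩ := exists_windingNumber_ne_zero h0
  obtain ⟨i, -, hi⟩ := exists_ne_zero_of_sum_ne_zero ha
  rcases lowerRay_of_lowerRayCrossing_ne_zero hi with h | h
  · exact ⟨_, (windingNumber_iterate a i).symm ▸ ha, h⟩
  · exact ⟨_, (windingNumber_iterate a (i + 1)).symm ▸ ha,
      by rwa [← dualTail_contour_succ] at h⟩

lemma exists_contour_height_nonneg {e : boundary C} (he : windingNumber e ≠ 0) :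
    ∃ i < contourLength e, 0 ≤ dualTail (contour e i) 1 := by
  by_contra! h
  refine he ?_
  rw [windingNumber, ← sum_axisCrossing_contour e]
  exact sum_congr rfl fun i hi => if_pos (h i (mem_range.1 hi))

def lowerRayPoint (m : ℕ) : ℤ² := ![0, -((m : ℤ) + 1)]

def dualWalk (m : ℕ) {n : ℕ} (r : Fin n → Fin 4) (k : Fin (n + 1)) : ℤ² :=
  lowerRayPoint m + Fin.partialSum (fun i => dir (r i + 1)) k

/-- The primal edges crossed by the dual walk from `(0, -(m + 1))` whose `i`-th step crosses a
dart in direction `r i`. -/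
def contourEdges (m : ℕ) {n : ℕ} (r : Fin n → Fin 4) (i : Fin n) : latticeEdge 2 :=
  toEdge (dualWalk m r i.castSucc - corner (r i), r i)

lemma dualWalk_succ (m : ℕ) {n : ℕ} (r : Fin n → Fin 4) (i : Fin n) :
    dualWalk m r i.succ = dualWalk m r i.castSucc + dir (r i + 1) := by
  rw [dualWalk, dualWalk, Fin.partialSum_succ, add_assoc]

lemma dualWalk_apply_one_le (m : ℕ) {n : ℕ} (r : Fin n → Fin 4) (k : Fin (n + 1)) :
    dualWalk m r k 1 ≤ -((m : ℤ) + 1) + k := by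
  induction k using Fin.induction with
  | zero => simp [dualWalk, lowerRayPoint]
  | succ i ih =>
    rw [dualWalk_succ, Pi.add_apply, Fin.val_succ, Nat.cast_succ]
    have := dir_apply_one_le (r i + 1)
    simp only [Fin.val_castSucc] at ih
    omega

lemma exists_contourEdges_of_windingNumber_ne_zero {e : boundary C} (he : windingNumber e ≠ 0)
    (hstart : dualTail e 0 = 0 ∧ dualTail e 1 < 0) :
    ∃ (m n : ℕ) (r : Fin n → Fin 4), m < n ∧ Injective (contourEdges m r) ∧
      ∀ i, ∃ e ∈ boundary C, contourEdges m r i = toEdge e := by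
  obtain ⟨m, hm⟩ : ∃ m : ℕ, lowerRayPoint m = dualTail e :=
    ⟨(-dualTail e 1 - 1).toNat, by ext i; fin_cases i <;> simp [lowerRayPoint] <;> omega⟩
  let r : Fin (contourLength e) → Fin 4 := fun i => (contour e i).2
  have hwalk : ∀ k, dualWalk m r k = dualTail (contour e k) := by
    refine Fin.induction (by simpa [dualWalk, contour] using hm) fun i ih => ?_
    rw [dualWalk_succ, ih, Fin.val_succ, dualTail_contour_succ]
    rfl
  have hedges : ∀ i, contourEdges m r i = toEdge (contour e i) := fun i => by
    rw [contourEdges, hwalk, Fin.val_castSucc, dualTail, add_sub_cancel_right]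
  refine ⟨m, contourLength e, r, ?_, fun i j hij => ?_,
    fun i => ⟨_, contour_mem e i, hedges i⟩⟩
  · obtain ⟨i, hi, hheight⟩ := exists_contour_height_nonneg he
    have := dualWalk_apply_one_le m r ⟨i, by omega⟩
    rw [hwalk] at this
    simp only at this
    omega
  · rw [hedges, hedges] at hij
    exact Fin.ext (contour_injOn e i.2 j.2
      (toEdge_injOn_boundary (contour_mem e i) (contour_mem e j) hij))

theorem exists_closed_contourEdges {ω : latticeEdge 2 → Bool}
    (hfin : (bondCluster ω).Finite) :
    ∃ (m n : ℕ) (r : Fin n → Fin 4), m < n ∧ Injective (contourEdges m r) ∧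
      ∀ i, ω (contourEdges m r i) = false := by
  obtain ⟨e, he, hstart⟩ := exists_windingNumber_ne_zero_lowerRay
    (hfin.mem_toFinset.mpr Relation.ReflTransGen.refl)
  obtain ⟨m, n, r, hmn, hinj, hcross⟩ := exists_contourEdges_of_windingNumber_ne_zero he hstart
  refine ⟨m, n, r, hmn, hinj, fun i => ?_⟩
  obtain ⟨e, he, heq⟩ := hcross i
  rw [heq]
  exact toEdge_eq_false_of_mem_boundary hfin.coe_toFinset he

section Probability

variable {Ω : Type*} [MeasurableSpace Ω] {P : Measure Ω} {X : latticeEdge 2 → Ω → Bool}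

lemma measure_eq_false [IsProbabilityMeasure P] {e : latticeEdge 2} (he : Measurable (X e))
    {p : ℝ} (hp0 : 0 ≤ p) (hp : P {ω | X e ω = true} = ENNReal.ofReal p) :
    P {ω | X e ω = false} = ENNReal.ofReal (1 - p) := by
  have hcompl : {ω | X e ω = false} = {ω | X e ω = true}ᶜ := by ext; simp
  rw [hcompl, prob_compl_eq_one_sub (measurableSet_eq_fun he measurable_const), hp,
    ENNReal.ofReal_sub _ hp0, ENNReal.ofReal_one]

lemma measure_forall_eq_false (hind : iIndepFun X P) {q : ℝ≥0∞}
    (hq : ∀ e, P {ω | X e ω = false} = q) {n : ℕ} {E : Fin n → latticeEdge 2}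
    (hE : Injective E) : P {ω | ∀ i, X (E i) ω = false} = q ^ n := by
  have hprod := (hind.precomp hE).meas_iInter (s := fun i => X (E i) ⁻¹' {false})
    fun i => ⟨{false}, measurableSet_singleton _, rfl⟩
  simp only [Set.preimage, Set.mem_singleton_iff, Set.iInter_ofPred] at hprod
  simp [hprod, hq]

lemma measure_finite_cluster_le (hind : iIndepFun X P) {q : ℝ≥0∞}
    (hq : ∀ e, P {ω | X e ω = false} = q) :
    P {ω | (bondCluster fun e => X e ω).Finite} ≤
      ∑' (m : ℕ) (k : ℕ), (4 * q) ^ (m + k + 1) := by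
  have hcover : {ω | (bondCluster fun e => X e ω).Finite} ⊆
      ⋃ (m : ℕ) (k : ℕ) (r : Fin (m + k + 1) → Fin 4) (_ : Injective (contourEdges m r)),
        {ω | ∀ i, X (contourEdges m r i) ω = false} := by
    intro ω hω
    obtain ⟨m, n, r, hmn, hinj, hclosed⟩ := exists_closed_contourEdges hω
    obtain ⟨k, rfl⟩ := Nat.exists_eq_add_of_lt hmn
    simp only [Set.mem_iUnion]
    exact ⟨m, k, r, hinj, hclosed⟩
  calc _ ≤ _ := measure_mono hcover
    _ ≤ ∑' (m : ℕ) (k : ℕ) (r : Fin (m + k + 1) → Fin 4),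
          P (⋃ (_ : Injective (contourEdges m r)), {ω | ∀ i, X (contourEdges m r i) ω = false}) :=
        (measure_iUnion_le _).trans <| ENNReal.tsum_le_tsum fun m =>
          (measure_iUnion_le _).trans <| ENNReal.tsum_le_tsum fun k => measure_iUnion_le _
    _ ≤ ∑' (m : ℕ) (k : ℕ) (_ : Fin (m + k + 1) → Fin 4), q ^ (m + k + 1) := by
        gcongr with m k r
        by_cases hinj : Injective (contourEdges m r)
        · simp [hinj, measure_forall_eq_false hind hq hinj]
        · simp [hinj]
    _ = _ := by simp [tsum_fintype, mul_pow]

end Probability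

lemma tsum_tsum_pow_lt_one :
    ∑' (m : ℕ) (k : ℕ), (4 * ENNReal.ofReal (1 / 16)) ^ (m + k + 1) < 1 := by
  have h4 : 4 * ENNReal.ofReal (1 / 16) = ENNReal.ofReal (1 / 4) := by
    rw [← ENNReal.ofReal_ofNat 4, ← ENNReal.ofReal_mul (by norm_num)]
    norm_num
  rw [ENNReal.tsum_tsum_pow_add_add_one, h4, ← ENNReal.ofReal_one,
    ← ENNReal.ofReal_sub _ (by norm_num), ← ENNReal.ofReal_inv_of_pos (by norm_num),
    ← ENNReal.ofReal_pow (by norm_num), ← ENNReal.ofReal_mul (by norm_num),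
    ENNReal.ofReal_lt_ofReal_iff (by norm_num)]
  norm_num

end Peierls

/-- (Hammersley, via duality / the Peierls argument) For bond percolation on `ℤ²`
there exists `p < 1` such that the open cluster of the origin is infinite with
strictly positive probability; that is, `p_c < 1`. -/
theorem percolation_pc_lt_one :
    ∃ p : ℝ, 0 ≤ p ∧ p < 1 ∧
      ∀ (Ω : Type) [MeasurableSpace Ω] (P : Measure Ω) [IsProbabilityMeasure P]
        (X : latticeEdge 2 → Ω → Bool),
        (∀ e, Measurable (X e)) →
        iIndepFun X P →
        (∀ e, P {ω | X e ω = true} = ENNReal.ofReal p) →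
        0 < P {ω | (bondCluster (fun e => X e ω)).Infinite} := by
  refine ⟨15 / 16, by norm_num, by norm_num, fun Ω _ P _ X hX hind hp => ?_⟩
  have hclosed : ∀ e, P {ω | X e ω = false} = ENNReal.ofReal (1 / 16) := fun e => by
    rw [Peierls.measure_eq_false (hX e) (by norm_num) (hp e)]
    norm_num
  refine measure_pos_of_measure_compl_lt_one
    (lt_of_le_of_lt ?_ Peierls.tsum_tsum_pow_lt_one)
  simpa only [Set.compl_ofPred, Set.not_infinite] using
    Peierls.measure_finite_cluster_le hind hclosed
end

section
/- (Hammersley, comparison of atom and bond percolation) For every dimension d ≥ 2 and every p ∈ [0,1], the probability that the origin of ℤ^d lies in an infinite open cluster in site percolation with parameter p is at most the probability that the origin lies in an infinite open cluster in bond percolation with the same parameter p. -/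
open MeasureTheory ProbabilityTheory Filter

/-- In the site configuration `η`, `a` and `b` are neighbouring open vertices. -/
def siteAdj {d : ℕ} (η : (Fin d → ℤ) → Bool) (a b : Fin d → ℤ) : Prop :=
  (∑ j, |a j - b j|) = 1 ∧ η a = true ∧ η b = true

/-- The open cluster of the origin in site percolation: all open vertices joined
to the origin by a nearest-neighbour path of open vertices (empty if the origin
is closed). -/
def siteCluster {d : ℕ} (η : (Fin d → ℤ) → Bool) : Set (Fin d → ℤ) :=
  {y | η 0 = true ∧ Relation.ReflTransGen (siteAdj η) 0 y}

/-!
Explore the open site cluster and the open bond cluster of the origin simultaneously. When the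
site exploration reveals a new site `y` next to an already reached site `x`, the bond exploration
reveals a still unrevealed edge `e` joining `x` to `y`. Both are open with probability `p`, and if
they are, both explorations have reached `y`; if they are closed, the site exploration can never
use `y`, while the bond exploration may still reach `y` through another edge. Induction on the
number of unrevealed sites of a finite ball thus shows that the site cluster reaches the sphere of
radius `n` with at most the probability that the bond cluster does. An infinite cluster reaches
every sphere, and the bond events decrease in `n`, so continuity from above gives the theorem.
-/

namespace Relation

variable {α : Type*} {r s : α → α → Prop} {D : Set α} {x y : α}

lemma ReflTransGen.mem_of_forall_step (h : ReflTransGen r x y) (hx : x ∈ D)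
    (hD : ∀ a b, a ∈ D → r a b → b ∈ D) : y ∈ D := by
  induction h with
  | refl => exact hx
  | tail _ hbc ih => exact hD _ _ ih hbc

lemma ReflTransGen.exists_mem_reflTransGen (h : ReflTransGen r x y) (hx : x ∈ D)
    (hrs : ∀ a b, r a b → s a b ∨ b ∈ D) : ∃ c ∈ D, ReflTransGen s c y := by
  induction h with
  | refl => exact ⟨x, hx, .refl⟩
  | @tail b c _ hbc ih =>
    obtain ⟨c', hc', hpath⟩ := ih
    rcases hrs b c hbc with hs | hc
    · exact ⟨c', hc', hpath.tail hs⟩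
    · exact ⟨c, hc, .refl⟩

lemma ReflTransGen.exists_eq_and_reflTransGen_of_le {h : α → ℤ}
    (hr : ∀ a b, r a b → h b ≤ h a + 1) (hxy : ReflTransGen r x y) {n : ℤ} (hx : h x ≤ n)
    (hy : n ≤ h y) : ∃ z, h z = n ∧ ReflTransGen (fun a b => r a b ∧ h a ≤ n ∧ h b ≤ n) x z := by
  have hstop : ∀ y, ReflTransGen r x y →
      (h y ≤ n ∧ ReflTransGen (fun a b => r a b ∧ h a ≤ n ∧ h b ≤ n) x y) ∨
        ∃ z, h z = n ∧ ReflTransGen (fun a b => r a b ∧ h a ≤ n ∧ h b ≤ n) x z := by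
    intro y hxy
    induction hxy with
    | refl => exact .inl ⟨hx, .refl⟩
    | @tail b c _ hbc ih =>
      rcases ih with ⟨hb, hxb⟩ | hz
      · by_cases hc : h c ≤ n
        · exact .inl ⟨hc, hxb.tail ⟨hbc, hb, hc⟩⟩
        · exact .inr ⟨b, by linarith [hr b c hbc], hxb⟩
      · exact .inr hz
  rcases hstop y hxy with ⟨hy', hxy'⟩ | hz
  · exact ⟨y, le_antisymm hy' hy, hxy'⟩
  · exact hz

end Relation

section Independence

variable {Ω ι : Type*} {X : ι → Ω → Bool} {Φ : (ι → Bool) → Prop} {U : Finset ι}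

lemma DependsOn.setOf_eq_preimage (hΦ : DependsOn Φ U) :
    ∃ S : Set (U → Bool), {ω | Φ (fun i => X i ω)} = (fun ω (i : U) => X i ω) ⁻¹' S := by
  obtain ⟨g, hg⟩ := dependsOn_iff_exists_comp.mp hΦ
  exact ⟨{s | g s}, by rw [hg]; rfl⟩

variable [MeasurableSpace Ω] {P : Measure Ω}

lemma measurableSet_setOf_of_dependsOn (hX : ∀ i, Measurable (X i)) (hΦ : DependsOn Φ U) :
    MeasurableSet {ω | Φ (fun i => X i ω)} := by
  obtain ⟨S, hS⟩ := hΦ.setOf_eq_preimage (X := X)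
  rw [hS]
  exact measurable_pi_lambda (fun ω (i : U) => X i ω) (fun i => hX i) .of_discrete

lemma measure_setOf_inter_eq_mul_of_dependsOn (hX : ∀ i, Measurable (X i)) (hind : iIndepFun X P)
    (hΦ : DependsOn Φ U) {i : ι} (hi : i ∉ U) (b : Bool) :
    P ({ω | Φ (fun j => X j ω)} ∩ {ω | X i ω = b}) =
      P {ω | Φ (fun j => X j ω)} * P {ω | X i ω = b} := by
  obtain ⟨S, hS⟩ := hΦ.setOf_eq_preimage (X := X)
  have hb : {ω | X i ω = b} =
      (fun ω (j : ({i} : Finset ι)) => X j ω) ⁻¹' {s | s ⟨i, Finset.mem_singleton_self i⟩ = b} :=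
    rfl
  rw [hS, hb]
  exact (hind.indepFun_finset U {i} (Finset.disjoint_singleton_right.mpr hi) hX
    ).measure_inter_preimage_eq_mul _ _ .of_discrete .of_discrete

lemma measure_setOf_eq_add_of_dependsOn [IsProbabilityMeasure P] (hX : ∀ i, Measurable (X i))
    (hind : iIndepFun X P) {Φ₁ Φ₀ : (ι → Bool) → Prop} (h₁ : DependsOn Φ₁ U)
    (h₀ : DependsOn Φ₀ U) {i : ι} (hi : i ∉ U)
    (hΦ₁ : ∀ η, η i = true → (Φ η ↔ Φ₁ η)) (hΦ₀ : ∀ η, η i = false → (Φ η ↔ Φ₀ η)) :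
    P {ω | Φ (fun j => X j ω)} =
      P {ω | X i ω = true} * P {ω | Φ₁ (fun j => X j ω)} +
        (1 - P {ω | X i ω = true}) * P {ω | Φ₀ (fun j => X j ω)} := by
  have hmeas : MeasurableSet {ω | X i ω = true} := hX i (.singleton true)
  have hfalse : {ω | X i ω = true}ᶜ = {ω | X i ω = false} := by ext; simp
  rw [← measure_inter_add_sdiff _ hmeas, Set.sdiff_eq, ← prob_compl_eq_one_sub hmeas, hfalse]
  have e₁ : {ω | Φ (fun j => X j ω)} ∩ {ω | X i ω = true} =
      {ω | Φ₁ (fun j => X j ω)} ∩ {ω | X i ω = true} := by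
    ext ω; simp only [Set.mem_inter_iff, Set.mem_ofPred_eq]
    exact and_congr_left fun h => hΦ₁ _ h
  have e₀ : {ω | Φ (fun j => X j ω)} ∩ {ω | X i ω = false} =
      {ω | Φ₀ (fun j => X j ω)} ∩ {ω | X i ω = false} := by
    ext ω; simp only [Set.mem_inter_iff, Set.mem_ofPred_eq]
    exact and_congr_left fun h => hΦ₀ _ h
  rw [e₁, e₀, measure_setOf_inter_eq_mul_of_dependsOn hX hind h₁ hi,
    measure_setOf_inter_eq_mul_of_dependsOn hX hind h₀ hi, mul_comm, mul_comm (P {ω | Φ₀ _})]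

end Independence

section Exploration

open Relation

variable {V E : Type*} (ends : E → Sym2 V)

-- Edge `e` of the multigraph joins the two points of `ends e`. The sites in `C` have already been
-- reached; only the sites in `U` (resp. the edges in `F`) are still unrevealed and may be used.
-- `EdgesUnrevealed` is the invariant keeping the bond exploration at least as free as the site one.
def siteStep (C U : Finset V) (η : V → Bool) (a b : V) : Prop :=
  (∃ e, ends e = s(a, b)) ∧ (b ∈ C ∨ b ∈ U ∧ η b = true)

def siteReach (T : Set V) (C U : Finset V) (η : V → Bool) : Prop :=
  ∃ c ∈ C, ∃ v ∈ T, ReflTransGen (siteStep ends C U η) c v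

def bondStep (F : Finset E) (ω : E → Bool) (a b : V) : Prop :=
  ∃ e ∈ F, ends e = s(a, b) ∧ ω e = true

def bondReach (T : Set V) (C : Finset V) (F : Finset E) (ω : E → Bool) : Prop :=
  ∃ c ∈ C, ∃ v ∈ T, ReflTransGen (bondStep ends F ω) c v

def EdgesUnrevealed [DecidableEq V] (C U : Finset V) (F : Finset E) : Prop :=
  ∀ e, ∀ x ∈ C ∪ U, ∀ y ∈ U, ends e = s(x, y) → e ∈ F

variable {ends} {T : Set V} {C U : Finset V} {F : Finset E}
  {η : V → Bool} {ω : E → Bool} {x y : V} {e : E}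

lemma siteReach_dependsOn : DependsOn (siteReach ends T C U) U := by
  intro η η' h
  have hstep : siteStep ends C U η = siteStep ends C U η' := by
    ext a b
    by_cases hb : b ∈ U
    · simp [siteStep, h b hb]
    · simp [siteStep, hb]
  rw [siteReach, siteReach, hstep]

lemma bondReach_dependsOn : DependsOn (bondReach ends T C F) F := by
  intro ω ω' h
  have hstep : bondStep ends F ω = bondStep ends F ω' := by
    ext a b
    simp only [bondStep]
    exact exists_congr fun e => and_congr_right fun he => by rw [h e he]
  rw [bondReach, bondReach, hstep]

lemma exists_mem_of_siteReach (hC : ∀ x ∈ C, ∀ y ∈ U, ∀ e, ends e ≠ s(x, y))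
    (h : siteReach ends T C U η) : ∃ v ∈ T, v ∈ C := by
  obtain ⟨c, hc, v, hv, hcv⟩ := h
  refine ⟨v, hv, hcv.mem_of_forall_step (D := ↑C) hc fun a b ha ⟨⟨e, hab⟩, hb⟩ => ?_⟩
  rcases hb with hb | ⟨hb, -⟩
  · exact hb
  · exact absurd hab (hC a ha b hb e)

lemma siteReach_iff_of_true [DecidableEq V] (hx : x ∈ C) (hy : y ∈ U) (hxy : ends e = s(x, y))
    (hη : η y = true) :
    siteReach ends T C U η ↔ siteReach ends T (insert y C) (U.erase y) η := by
  have hstep : siteStep ends C U η = siteStep ends (insert y C) (U.erase y) η := by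
    ext a b
    simp only [siteStep, Finset.mem_insert, Finset.mem_erase]
    by_cases hb : b = y <;> simp_all
  rw [siteReach, siteReach, hstep]
  constructor
  · rintro ⟨c, hc, v, hv, hcv⟩
    exact ⟨c, Finset.mem_insert_of_mem hc, v, hv, hcv⟩
  · rintro ⟨c, hc, v, hv, hcv⟩
    rcases Finset.mem_insert.mp hc with rfl | hc
    · exact ⟨x, hx, v, hv, .head ⟨⟨e, hxy⟩, .inl (Finset.mem_insert_self c C)⟩ hcv⟩
    · exact ⟨c, hc, v, hv, hcv⟩

lemma siteReach_iff_of_false [DecidableEq V] (hη : η y = false) :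
    siteReach ends T C U η ↔ siteReach ends T C (U.erase y) η := by
  have hstep : siteStep ends C U η = siteStep ends C (U.erase y) η := by
    ext a b
    simp only [siteStep, Finset.mem_erase]
    by_cases hb : b = y <;> simp_all
  rw [siteReach, siteReach, hstep]

lemma bondReach_iff_of_true [DecidableEq V] [DecidableEq E] (hx : x ∈ C) (he : e ∈ F)
    (hxy : ends e = s(x, y)) (hω : ω e = true) :
    bondReach ends T C F ω ↔ bondReach ends T (insert y C) (F.erase e) ω := by
  have hmono : bondStep ends (F.erase e) ω ≤ bondStep ends F ω :=
    fun a b ⟨f, hf, hab, hωf⟩ => ⟨f, Finset.mem_of_mem_erase hf, hab, hωf⟩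
  have hstep : ∀ a b, bondStep ends F ω a b → bondStep ends (F.erase e) ω a b ∨ b ∈ insert y C := by
    rintro a b ⟨f, hf, hab, hωf⟩
    by_cases hfe : f = e
    · subst hfe
      rcases Sym2.mem_iff.mp (hxy ▸ hab ▸ Sym2.mem_mk_right a b : b ∈ s(x, y)) with rfl | rfl
      · exact .inr (Finset.mem_insert_of_mem hx)
      · exact .inr (Finset.mem_insert_self b C)
    · exact .inl ⟨f, Finset.mem_erase.mpr ⟨hfe, hf⟩, hab, hωf⟩
  constructor
  · rintro ⟨c, hc, v, hv, hcv⟩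
    obtain ⟨c', hc', hc'v⟩ :=
      hcv.exists_mem_reflTransGen (D := ↑(insert y C)) (Finset.mem_insert_of_mem hc) hstep
    exact ⟨c', hc', v, hv, hc'v⟩
  · rintro ⟨c, hc, v, hv, hcv⟩
    have hcv' := ReflTransGen.mono hmono _ _ hcv
    rcases Finset.mem_insert.mp hc with rfl | hc
    · exact ⟨x, hx, v, hv, .head ⟨e, he, hxy, hω⟩ hcv'⟩
    · exact ⟨c, hc, v, hv, hcv'⟩

lemma bondReach_iff_of_false [DecidableEq E] (hω : ω e = false) :
    bondReach ends T C F ω ↔ bondReach ends T C (F.erase e) ω := by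
  have hstep : bondStep ends F ω = bondStep ends (F.erase e) ω := by
    ext a b
    simp only [bondStep, Finset.mem_erase]
    constructor
    · rintro ⟨f, hf, hab, hωf⟩
      exact ⟨f, ⟨by rintro rfl; simp_all, hf⟩, hab, hωf⟩
    · rintro ⟨f, ⟨-, hf⟩, hab, hωf⟩
      exact ⟨f, hf, hab, hωf⟩
  rw [bondReach, bondReach, hstep]

lemma EdgesUnrevealed.erase [DecidableEq V] [DecidableEq E] (hF : EdgesUnrevealed ends C U F)
    (hCU : Disjoint C U) (hx : x ∈ C) (hy : y ∈ U) (hxy : ends e = s(x, y)) {C' : Finset V}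
    (hC' : C' ⊆ insert y C) : EdgesUnrevealed ends C' (U.erase y) (F.erase e) := by
  intro f a ha b hb hab
  obtain ⟨hby, hbU⟩ := Finset.mem_erase.mp hb
  have haCU : a ∈ C ∪ U := by
    rcases Finset.mem_union.mp ha with ha | ha
    · rcases Finset.mem_insert.mp (hC' ha) with rfl | ha
      · exact Finset.mem_union_right C hy
      · exact Finset.mem_union_left U ha
    · exact Finset.mem_union_right C (Finset.mem_of_mem_erase ha)
  refine Finset.mem_erase.mpr ⟨?_, hF f a haCU b hbU hab⟩
  rintro rfl
  -- the ends of `e` are `x ∈ C` and `y`, neither of which lies in `U.erase y`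
  rcases Sym2.mem_iff.mp (hxy ▸ hab ▸ Sym2.mem_mk_right a b : b ∈ s(x, y)) with rfl | rfl
  · exact Finset.disjoint_left.mp hCU hx hbU
  · exact hby rfl

end Exploration

section Comparison

open scoped ENNReal

variable {V E : Type*} {ends : E → Sym2 V}
  {Ω₁ Ω₂ : Type*} [MeasurableSpace Ω₁] [MeasurableSpace Ω₂]
  {P₁ : Measure Ω₁} {P₂ : Measure Ω₂} [IsProbabilityMeasure P₁] [IsProbabilityMeasure P₂]
  {X : E → Ω₁ → Bool} {Y : V → Ω₂ → Bool} {q : ℝ≥0∞} {T : Set V}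

lemma measure_siteReach_eq [DecidableEq V] (hY : ∀ v, Measurable (Y v)) (hYind : iIndepFun Y P₂)
    (hYq : ∀ v, P₂ {ω | Y v ω = true} = q) {C U : Finset V} {x y : V} {e : E}
    (hx : x ∈ C) (hy : y ∈ U) (hxy : ends e = s(x, y)) :
    P₂ {ω | siteReach ends T C U (fun v => Y v ω)} =
      q * P₂ {ω | siteReach ends T (insert y C) (U.erase y) (fun v => Y v ω)} +
        (1 - q) * P₂ {ω | siteReach ends T C (U.erase y) (fun v => Y v ω)} := by
  rw [← hYq y]
  exact measure_setOf_eq_add_of_dependsOn hY hYind siteReach_dependsOn siteReach_dependsOn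
    (Finset.notMem_erase y U) (fun η hη => siteReach_iff_of_true hx hy hxy hη)
    fun η hη => siteReach_iff_of_false hη

lemma measure_bondReach_eq [DecidableEq V] [DecidableEq E] (hX : ∀ e, Measurable (X e))
    (hXind : iIndepFun X P₁) (hXq : ∀ e, P₁ {ω | X e ω = true} = q) {C : Finset V}
    {F : Finset E} {x y : V} {e : E}
    (hx : x ∈ C) (he : e ∈ F) (hxy : ends e = s(x, y)) :
    P₁ {ω | bondReach ends T C F (fun e => X e ω)} =
      q * P₁ {ω | bondReach ends T (insert y C) (F.erase e) (fun e => X e ω)} +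
        (1 - q) * P₁ {ω | bondReach ends T C (F.erase e) (fun e => X e ω)} := by
  rw [← hXq e]
  exact measure_setOf_eq_add_of_dependsOn hX hXind bondReach_dependsOn bondReach_dependsOn
    (Finset.notMem_erase e F) (fun ω hω => bondReach_iff_of_true hx he hxy hω)
    fun ω hω => bondReach_iff_of_false hω

lemma measure_siteReach_le_of_isolated {C U : Finset V} {F : Finset E}
    (hC : ∀ x ∈ C, ∀ y ∈ U, ∀ e, ends e ≠ s(x, y)) :
    P₂ {ω | siteReach ends T C U (fun v => Y v ω)} ≤
      P₁ {ω | bondReach ends T C F (fun e => X e ω)} := by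
  by_cases hTC : ∃ v ∈ T, v ∈ C
  · obtain ⟨v, hv, hvC⟩ := hTC
    have hbond : {ω | bondReach ends T C F (fun e => X e ω)} = Set.univ :=
      Set.eq_univ_of_forall fun ω => ⟨v, hvC, v, hv, .refl⟩
    rw [hbond, measure_univ]
    exact prob_le_one
  · have hsite : {ω | siteReach ends T C U (fun v => Y v ω)} = ∅ :=
      Set.eq_empty_of_forall_notMem fun ω h => hTC (exists_mem_of_siteReach hC h)
    rw [hsite, measure_empty]
    exact zero_le

theorem measure_siteReach_le_measure_bondReach [DecidableEq V] [DecidableEq E]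
    (hX : ∀ e, Measurable (X e)) (hXind : iIndepFun X P₁) (hXq : ∀ e, P₁ {ω | X e ω = true} = q)
    (hY : ∀ v, Measurable (Y v)) (hYind : iIndepFun Y P₂) (hYq : ∀ v, P₂ {ω | Y v ω = true} = q)
    (C U : Finset V) (F : Finset E) (hCU : Disjoint C U)
    (hF : EdgesUnrevealed ends C U F) :
    P₂ {ω | siteReach ends T C U (fun v => Y v ω)} ≤
      P₁ {ω | bondReach ends T C F (fun e => X e ω)} := by
  induction U using Finset.strongInduction generalizing C F with
  | H U ih =>
  by_cases hfront : ∃ x ∈ C, ∃ y ∈ U, ∃ e, ends e = s(x, y)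
  · obtain ⟨x, hx, y, hy, e, hxy⟩ := hfront
    have he : e ∈ F := hF e x (Finset.mem_union_left U hx) y hy hxy
    have hCU' : Disjoint C (U.erase y) := hCU.mono_right (Finset.erase_subset y U)
    have hU' := Finset.erase_ssubset hy
    rw [measure_siteReach_eq hY hYind hYq hx hy hxy, measure_bondReach_eq hX hXind hXq hx he hxy]
    gcongr
    · exact ih _ hU' _ _ (Finset.disjoint_insert_left.mpr ⟨Finset.notMem_erase y U, hCU'⟩)
        (hF.erase hCU hx hy hxy subset_rfl)
    · exact ih _ hU' _ _ hCU' (hF.erase hCU hx hy hxy (Finset.subset_insert y C))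
  · push Not at hfront
    exact measure_siteReach_le_of_isolated hfront

end Comparison

section Lattice

open Relation

variable {d : ℕ}

def latticeEnds (e : latticeEdge d) : Sym2 (Fin d → ℤ) := s(e.1, e.1 + Pi.single e.2 1)

def l1Norm (y : Fin d → ℤ) : ℤ := ∑ j, |y j|

lemma l1Norm_le_add_sum_abs_sub (a b : Fin d → ℤ) : l1Norm b ≤ l1Norm a + ∑ j, |a j - b j| := by
  rw [l1Norm, l1Norm, ← Finset.sum_add_distrib]
  refine Finset.sum_le_sum fun j _ => ?_
  linarith [abs_sub_abs_le_abs_sub (b j) (a j), abs_sub_comm (a j) (b j)]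

lemma sum_abs_sub_eq_one_of_latticeEnds {e : latticeEdge d} {a b : Fin d → ℤ}
    (h : latticeEnds e = s(a, b)) : ∑ j, |a j - b j| = 1 := by
  have hsingle : ∑ j, |(Pi.single e.2 1 : Fin d → ℤ) j| = 1 := by
    simp [Pi.single_apply, apply_ite]
  rcases Sym2.eq_iff.mp h with ⟨rfl, rfl⟩ | ⟨rfl, rfl⟩
  · simpa [abs_sub_comm] using hsingle
  · simpa using hsingle

lemma exists_latticeEnds_of_sum_abs_sub_eq_one {a b : Fin d → ℤ} (h : ∑ j, |a j - b j| = 1) :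
    ∃ e, latticeEnds e = s(a, b) := by
  obtain ⟨j, hj⟩ : ∃ j, a j - b j ≠ 0 := by
    by_contra! h0
    simp [h0] at h
  have hsplit := Finset.add_sum_erase Finset.univ (fun k => |a k - b k|) (Finset.mem_univ j)
  have hrest_nonneg :=
    Finset.sum_nonneg fun k (_ : k ∈ Finset.univ.erase j) => abs_nonneg (a k - b k)
  have hj1 : |a j - b j| = 1 := by
    have := Int.one_le_abs hj
    omega
  have hoff : ∀ k ≠ j, a k = b k := fun k hk => by
    have hrest : ∑ k ∈ Finset.univ.erase j, |a k - b k| = 0 := by omega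
    have := (Finset.sum_eq_zero_iff_of_nonneg fun k _ => abs_nonneg (a k - b k)).mp hrest k
      (Finset.mem_erase.mpr ⟨hk, Finset.mem_univ k⟩)
    simpa [sub_eq_zero] using this
  have hshift : ∀ {u v : Fin d → ℤ}, u j = v j + 1 → (∀ k ≠ j, u k = v k) →
      u = v + Pi.single j 1 := fun hj hk => funext fun k => by
    by_cases hkj : k = j
    · subst hkj; simpa using hj
    · simpa [hkj] using hk k hkj
  rcases abs_eq (zero_le_one' ℤ) |>.mp hj1 with hab | hab
  · exact ⟨(b, j), by rw [latticeEnds, ← hshift (by omega) hoff, Sym2.eq_swap]⟩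
  · exact ⟨(a, j), by rw [latticeEnds, ← hshift (by omega) fun k hk => (hoff k hk).symm]⟩

lemma openAdj_of_latticeEnds {ω : latticeEdge d → Bool} {e : latticeEdge d} {a b : Fin d → ℤ}
    (h : latticeEnds e = s(a, b)) (hω : ω e = true) : openAdj ω a b := by
  rcases Sym2.eq_iff.mp h with ⟨rfl, rfl⟩ | ⟨rfl, rfl⟩
  · exact .inl ⟨e.2, rfl, hω⟩
  · exact .inr ⟨e.2, rfl, hω⟩

noncomputable def l1Ball (d n : ℕ) : Finset (Fin d → ℤ) :=
  {y ∈ Fintype.piFinset fun _ => Finset.Icc (-(n : ℤ)) n | l1Norm y ≤ n}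

lemma mem_l1Ball {n : ℕ} {y : Fin d → ℤ} : y ∈ l1Ball d n ↔ l1Norm y ≤ n := by
  refine ⟨fun h => (Finset.mem_filter.mp h).2, fun h => Finset.mem_filter.mpr ⟨?_, h⟩⟩
  refine Fintype.mem_piFinset.mpr fun j => Finset.mem_Icc.mpr (abs_le.mp ?_)
  exact (Finset.single_le_sum (fun k _ => abs_nonneg (y k)) (Finset.mem_univ j)).trans h

noncomputable def l1BallEdges (d n : ℕ) : Finset (latticeEdge d) :=
  {e ∈ l1Ball d n ×ˢ Finset.univ | e.1 + Pi.single e.2 1 ∈ l1Ball d n}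

lemma mem_l1BallEdges_of_latticeEnds {n : ℕ} {e : latticeEdge d} {a b : Fin d → ℤ}
    (h : latticeEnds e = s(a, b)) (ha : a ∈ l1Ball d n) (hb : b ∈ l1Ball d n) :
    e ∈ l1BallEdges d n := by
  simp only [l1BallEdges, Finset.mem_filter, Finset.mem_product, Finset.mem_univ, and_true]
  rcases Sym2.eq_iff.mp h with ⟨h1, h2⟩ | ⟨h1, h2⟩
  · exact ⟨h1 ▸ ha, h2 ▸ hb⟩
  · exact ⟨h1 ▸ hb, h2 ▸ ha⟩

def siteReachesSphere (n : ℕ) (η : (Fin d → ℤ) → Bool) : Prop :=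
  siteReach latticeEnds {v | l1Norm v = n} {0} ((l1Ball d n).erase 0) η

def bondReachesSphere (n : ℕ) (ω : latticeEdge d → Bool) : Prop :=
  bondReach latticeEnds {v | l1Norm v = n} {0} (l1BallEdges d n) ω

lemma siteReachesSphere_of_infinite {η : (Fin d → ℤ) → Bool} (h : (siteCluster η).Infinite)
    (n : ℕ) : siteReachesSphere n η := by
  obtain ⟨y, ⟨-, h0y⟩, hy⟩ := h.exists_notMem_finset (l1Ball d n)
  have hlip : ∀ a b, siteAdj η a b → l1Norm b ≤ l1Norm a + 1 := fun a b hab =>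
    hab.1 ▸ l1Norm_le_add_sum_abs_sub a b
  obtain ⟨z, hz, h0z⟩ := h0y.exists_eq_and_reflTransGen_of_le hlip (n := n)
    (by simp [l1Norm]) (by rw [mem_l1Ball] at hy; omega)
  refine ⟨0, Finset.mem_singleton_self 0, z, hz, ReflTransGen.mono ?_ _ _ h0z⟩
  rintro a b ⟨⟨hab, -, hb⟩, -, hbn⟩
  refine ⟨exists_latticeEnds_of_sum_abs_sub_eq_one hab, ?_⟩
  by_cases hb0 : b = 0
  · exact .inl (Finset.mem_singleton.mpr hb0)
  · exact .inr ⟨Finset.mem_erase.mpr ⟨hb0, mem_l1Ball.mpr hbn⟩, hb⟩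

lemma bondReachesSphere_antitone (ω : latticeEdge d → Bool) :
    Antitone fun n => bondReachesSphere n ω := by
  intro n m hnm h
  obtain ⟨c, hc, v, hv, hcv⟩ := h
  rw [Finset.mem_singleton.mp hc] at hcv
  have hlip : ∀ a b, bondStep latticeEnds (l1BallEdges d m) ω a b → l1Norm b ≤ l1Norm a + 1 :=
    fun a b ⟨e, _, hab, _⟩ => sum_abs_sub_eq_one_of_latticeEnds hab ▸ l1Norm_le_add_sum_abs_sub a b
  have hv : l1Norm v = m := hv
  obtain ⟨z, hz, h0z⟩ := hcv.exists_eq_and_reflTransGen_of_le hlip (n := n)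
    (by simp [l1Norm]) (by rw [hv]; exact_mod_cast hnm)
  refine ⟨0, Finset.mem_singleton_self 0, z, hz, ReflTransGen.mono ?_ _ _ h0z⟩
  rintro a b ⟨⟨e, -, hab, hω⟩, ha, hb⟩
  exact ⟨e, mem_l1BallEdges_of_latticeEnds hab (mem_l1Ball.mpr ha) (mem_l1Ball.mpr hb), hab, hω⟩

lemma infinite_bondCluster_of_forall_bondReachesSphere {ω : latticeEdge d → Bool}
    (h : ∀ n, bondReachesSphere n ω) : (bondCluster ω).Infinite := by
  refine Set.Infinite.of_image l1Norm (Set.infinite_of_forall_exists_gt fun k => ?_)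
  obtain ⟨c, hc, v, hv, hcv⟩ := h (k.toNat + 1)
  rw [Finset.mem_singleton.mp hc] at hcv
  have hv : l1Norm v = (k.toNat + 1 : ℕ) := hv
  refine ⟨l1Norm v, ⟨v, ReflTransGen.mono ?_ _ _ hcv, rfl⟩, by omega⟩
  rintro a b ⟨e, -, hab, hω⟩
  exact openAdj_of_latticeEnds hab hω

lemma measure_siteReachesSphere_le {Ω₁ Ω₂ : Type*} [MeasurableSpace Ω₁] [MeasurableSpace Ω₂]
    {P₁ : Measure Ω₁} {P₂ : Measure Ω₂} [IsProbabilityMeasure P₁] [IsProbabilityMeasure P₂]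
    {X : latticeEdge d → Ω₁ → Bool} {Y : (Fin d → ℤ) → Ω₂ → Bool} {q : ENNReal}
    (hX : ∀ e, Measurable (X e)) (hXind : iIndepFun X P₁) (hXq : ∀ e, P₁ {ω | X e ω = true} = q)
    (hY : ∀ v, Measurable (Y v)) (hYind : iIndepFun Y P₂) (hYq : ∀ v, P₂ {ω | Y v ω = true} = q)
    (n : ℕ) :
    P₂ {ω | siteReachesSphere n (fun v => Y v ω)} ≤
      P₁ {ω | bondReachesSphere n (fun e => X e ω)} := by
  refine measure_siteReach_le_measure_bondReach hX hXind hXq hY hYind hYq _ _ _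
    (Finset.disjoint_singleton_left.mpr (Finset.notMem_erase 0 _)) ?_
  intro e a ha b hb hab
  have h0 : (0 : Fin d → ℤ) ∈ l1Ball d n := mem_l1Ball.mpr (by simp [l1Norm])
  rw [← Finset.insert_eq, Finset.insert_erase h0] at ha
  exact mem_l1BallEdges_of_latticeEnds hab ha (Finset.mem_of_mem_erase hb)

end Lattice

theorem site_le_bond_percolation_general
    {Ω₁ : Type*} [MeasurableSpace Ω₁] (P₁ : Measure Ω₁) [IsProbabilityMeasure P₁]
    {Ω₂ : Type*} [MeasurableSpace Ω₂] (P₂ : Measure Ω₂) [IsProbabilityMeasure P₂]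
    (d : ℕ) (p : ℝ)
    (X : latticeEdge d → Ω₁ → Bool)
    (hXmeas : ∀ e, Measurable (X e))
    (hXindep : iIndepFun X P₁)
    (hXbernoulli : ∀ e, P₁ {ω | X e ω = true} = ENNReal.ofReal p)
    (Y : (Fin d → ℤ) → Ω₂ → Bool)
    (hYmeas : ∀ v, Measurable (Y v))
    (hYindep : iIndepFun Y P₂)
    (hYbernoulli : ∀ v, P₂ {ω | Y v ω = true} = ENNReal.ofReal p) :
    P₂ {ω | (siteCluster (fun v => Y v ω)).Infinite} ≤
      P₁ {ω | (bondCluster (fun e => X e ω)).Infinite} := by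
  set A : ℕ → Set Ω₁ := fun n => {ω | bondReachesSphere n (fun e => X e ω)}
  have hsite (n : ℕ) : P₂ {ω | (siteCluster (fun v => Y v ω)).Infinite} ≤ P₁ (A n) :=
    (measure_mono fun ω h => siteReachesSphere_of_infinite h n).trans
      (measure_siteReachesSphere_le hXmeas hXindep hXbernoulli hYmeas hYindep hYbernoulli n)
  have hA : Antitone A := fun n m hnm ω h => bondReachesSphere_antitone _ hnm h
  have hAmeas (n : ℕ) : MeasurableSet (A n) :=
    measurableSet_setOf_of_dependsOn hXmeas bondReach_dependsOn
  calc P₂ {ω | (siteCluster (fun v => Y v ω)).Infinite} ≤ ⨅ n, P₁ (A n) := le_iInf hsite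
    _ = P₁ (⋂ n, A n) :=
      (hA.measure_iInter (fun n => (hAmeas n).nullMeasurableSet) ⟨0, measure_ne_top _ _⟩).symm
    _ ≤ P₁ {ω | (bondCluster (fun e => X e ω)).Infinite} := measure_mono fun ω h =>
      infinite_bondCluster_of_forall_bondReachesSphere (Set.mem_iInter.mp h)

/-- (Hammersley, comparison of atom and bond percolation) For `d ≥ 2` and
`p ∈ [0,1]`, the probability that the origin lies in an infinite open cluster in
site percolation with parameter `p` is at most the corresponding probability for
bond percolation with the same parameter. -/
theorem site_le_bond_percolation
    {Ω₁ : Type*} [MeasurableSpace Ω₁] (P₁ : Measure Ω₁) [IsProbabilityMeasure P₁]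
    {Ω₂ : Type*} [MeasurableSpace Ω₂] (P₂ : Measure Ω₂) [IsProbabilityMeasure P₂]
    (d : ℕ) (hd : 2 ≤ d) (p : ℝ) (hp0 : 0 ≤ p) (hp1 : p ≤ 1)
    (X : latticeEdge d → Ω₁ → Bool)
    (hXmeas : ∀ e, Measurable (X e))
    (hXindep : iIndepFun X P₁)
    (hXbernoulli : ∀ e, P₁ {ω | X e ω = true} = ENNReal.ofReal p)
    (Y : (Fin d → ℤ) → Ω₂ → Bool)
    (hYmeas : ∀ v, Measurable (Y v))
    (hYindep : iIndepFun Y P₂)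
    (hYbernoulli : ∀ v, P₂ {ω | Y v ω = true} = ENNReal.ofReal p) :
    P₂ {ω | (siteCluster (fun v => Y v ω)).Infinite} ≤
      P₁ {ω | (bondCluster (fun e => X e ω)).Infinite} :=
  site_le_bond_percolation_general P₁ P₂ d p X hXmeas hXindep hXbernoulli Y hYmeas hYindep
    hYbernoulli
end

section
/- (Hammersley, existence of the dimer entropy) Fix d ≥ 2. For integers a₁, …, a_d ≥ 1 with even product, let f(a₁, …, a_d) be the number of dimer tilings of the d-dimensional brick of side lengths a₁, …, a_d, i.e. the number of perfect matchings of the grid graph on {1,…,a₁} × ⋯ × {1,…,a_d} with edges between points at ℓ¹-distance 1. Then there is a finite constant λ_d such that (a₁ a₂ ⋯ a_d)^{-1} log f(a₁, …, a_d) → λ_d as all of a₁, …, a_d tend to infinity through values of even product. -/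
open Filter

/-- The number of dimer tilings (perfect matchings) of the `d`-dimensional brick
with side lengths `a 0, …, a (d-1)`: fixed-point-free involutions of the grid
`{0,…,a 0 - 1} × ⋯` matching each cell to a cell at `ℓ¹`-distance `1`. -/
noncomputable def dimerCount (d : ℕ) (a : Fin d → ℕ) : ℕ :=
  Nat.card {m : (∀ i, Fin (a i)) → (∀ i, Fin (a i)) //
    Function.Involutive m ∧
    ∀ x, (∑ i, |((x i : ℤ)) - ((m x i : ℤ))|) = 1}

open Function Finset
open scoped Topology

/-!
Stacking two boxes along an axis glues their dimer tilings, so `f(b) f(c) ≤ f(a)` when `a` is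
obtained by stacking `b` and `c`. Cutting a box `a` of even volume into `⌊a i / b i⌋` slices along
each axis, where `b` has even sides, every leftover slab still has even volume and hence a tiling,
so `f(a) ≥ f(b) ^ ∏ ⌊a i / b i⌋`. The densities `log f / vol` are bounded by `d log 3`, and
doubling all sides does not decrease them; so their supremum `λ` over boxes of even volume is
approached by boxes with even sides, and the tiling bound then pushes the density of every large
box of even volume close to `λ`.
-/

section Matchings

variable {X Y Z : Type*}

/-- For an irreflexive `R` these are the perfect matchings of the graph `R`. -/
abbrev Matchings (R : X → X → Prop) : Type _ := {m : X → X // Involutive m ∧ ∀ x, R x (m x)}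

theorem card_matchings_mul_le [Finite X] {R : X → X → Prop} {S : Y → Y → Prop}
    {T : Z → Z → Prop} (e : Y ⊕ Z ≃ X) (hS : ∀ y y', S y y' → R (e (.inl y)) (e (.inl y')))
    (hT : ∀ z z', T z z' → R (e (.inr z)) (e (.inr z'))) :
    Nat.card (Matchings S) * Nat.card (Matchings T) ≤ Nat.card (Matchings R) := by
  rw [← Nat.card_prod]
  refine Nat.card_le_card_of_injective
    (fun m => ⟨e ∘ Sum.map m.1.1 m.2.1 ∘ e.symm, fun x => ?_, fun x => ?_⟩) ?_
  · obtain ⟨y | z, rfl⟩ := e.surjective x <;> simp [m.1.2.1 _, m.2.2.1 _]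
  · obtain ⟨y | z, rfl⟩ := e.surjective x
    · simpa using hS _ _ (m.1.2.2 y)
    · simpa using hT _ _ (m.2.2.2 z)
  · rintro ⟨⟨m₁, _⟩, ⟨m₂, _⟩⟩ ⟨⟨n₁, _⟩, ⟨n₂, _⟩⟩ h
    have h' (s : Y ⊕ Z) : Sum.map m₁ m₂ s = Sum.map n₁ n₂ s := by
      simpa using congrFun (congrArg Subtype.val h) (e s)
    have h₁ : m₁ = n₁ := funext fun y => by simpa using h' (.inl y)
    have h₂ : m₂ = n₂ := funext fun z => by simpa using h' (.inr z)
    subst h₁ h₂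
    rfl

end Matchings

section Box

variable {d : ℕ}

abbrev Cell (a : Fin d → ℕ) : Type := ∀ i, Fin (a i)

def GridAdj {a : Fin d → ℕ} (x y : Cell a) : Prop := ∑ i, |(x i : ℤ) - (y i : ℤ)| = 1

theorem dimerCount_eq_card_matchings (a : Fin d → ℕ) :
    dimerCount d a = Nat.card (Matchings (GridAdj (a := a))) := rfl

theorem card_cell (a : Fin d → ℕ) : Fintype.card (Cell a) = ∏ i, a i := by
  simp [Fintype.card_pi]

def Cell.shift {a b : Fin d → ℕ} (t : Fin d → ℕ) (h : ∀ i, b i + t i ≤ a i) (x : Cell b) :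
    Cell a :=
  fun i => ⟨x i + t i, by have := (x i).isLt; have := h i; omega⟩

namespace Cell

variable {a b : Fin d → ℕ} {t : Fin d → ℕ} {h : ∀ i, b i + t i ≤ a i}

@[simp] theorem shift_val (x : Cell b) (i : Fin d) : (shift t h x i : ℕ) = x i + t i := rfl

theorem shift_injective : Injective (shift t h) := fun x y hxy =>
  funext fun i => Fin.ext (by simpa using congrArg (fun z : Cell a => (z i : ℕ)) hxy)

theorem gridAdj_shift {x y : Cell b} (hxy : GridAdj x y) : GridAdj (shift t h x) (shift t h y) := by
  simpa [GridAdj] using hxy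

end Cell

theorem dimerCount_mul_le (a : Fin d → ℕ) (j : Fin d) {m n : ℕ} (h : a j = m + n) :
    dimerCount d (update a j m) * dimerCount d (update a j n) ≤ dimerCount d a := by
  have h₁ (i : Fin d) : update a j m i + 0 ≤ a i := by
    rcases eq_or_ne i j with rfl | hi <;> simp [*]
  have h₂ (i : Fin d) : update a j n i + Pi.single (M := fun _ => ℕ) j m i ≤ a i := by
    rcases eq_or_ne i j with rfl | hi <;> simp [*, add_comm]
  have hdisj (y : Cell (update a j m)) (z : Cell (update a j n)) :
      Cell.shift 0 h₁ y ≠ Cell.shift (Pi.single j m) h₂ z := fun hyz => by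
    have hj := congrArg (fun x : Cell a => (x j : ℕ)) hyz
    have hy := (y j).isLt
    simp only [Cell.shift_val, Pi.zero_apply, add_zero, Pi.single_eq_same, update_self] at hj hy
    omega
  have hcard :
      Fintype.card (Cell (update a j m) ⊕ Cell (update a j n)) = Fintype.card (Cell a) := by
    rw [Fintype.card_sum, card_cell, card_cell, card_cell, prod_update_of_mem (mem_univ j),
      prod_update_of_mem (mem_univ j), ← add_mul, ← h,
      prod_eq_mul_prod_sdiff_singleton_of_mem (mem_univ j)]
  have hbij : Bijective (Sum.elim (Cell.shift 0 h₁) (Cell.shift (Pi.single j m) h₂)) :=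
    (Fintype.bijective_iff_injective_and_card _).2
      ⟨Cell.shift_injective.sumElim Cell.shift_injective hdisj, hcard⟩
  simp only [dimerCount_eq_card_matchings]
  exact card_matchings_mul_le (Equiv.ofBijective _ hbij)
    (fun _ _ => Cell.gridAdj_shift (h := h₁)) (fun _ _ => Cell.gridAdj_shift (h := h₂))

end Box

section Tilings

variable {d : ℕ}

def pairPartner (v : ℕ) : ℕ := if v % 2 = 0 then v + 1 else v - 1

theorem pairPartner_pairPartner (v : ℕ) : pairPartner (pairPartner v) = v := by
  unfold pairPartner; split_ifs <;> omega

theorem pairPartner_lt {n v : ℕ} (hn : Even n) (hv : v < n) : pairPartner v < n := by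
  obtain ⟨k, rfl⟩ := hn
  unfold pairPartner; split_ifs <;> omega

theorem abs_sub_pairPartner (v : ℕ) : |(v : ℤ) - pairPartner v| = 1 := by
  unfold pairPartner
  split_ifs
  · simp
  · rw [Nat.cast_sub (by omega)]; simp

theorem dimerCount_pos_of_even {a : Fin d → ℕ} {j : Fin d} (hj : Even (a j)) :
    0 < dimerCount d a := by
  let partner (x : Cell a) : Fin (a j) := ⟨pairPartner (x j), pairPartner_lt hj (x j).isLt⟩
  have h_inv : Involutive fun x => update x j (partner x) := fun x => by
    ext i
    rcases eq_or_ne i j with rfl | hi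
    · simp [partner, pairPartner_pairPartner]
    · simp [hi]
  have h_adj (x : Cell a) : GridAdj x (update x j (partner x)) := by
    rw [GridAdj, sum_eq_single j (fun i _ hi => by simp [hi]) (by simp)]
    simpa [partner] using abs_sub_pairPartner (x j)
  rw [dimerCount_eq_card_matchings]
  exact Nat.card_pos_iff.2 ⟨⟨⟨_, h_inv, h_adj⟩⟩, inferInstance⟩

theorem dimerCount_pos {a : Fin d → ℕ} (ha : Even (∏ i, a i)) : 0 < dimerCount d a := by
  obtain ⟨j, -, hj⟩ := (Nat.prime_two.prime.dvd_finsetProd_iff a).1 (even_iff_two_dvd.1 ha)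
  exact dimerCount_pos_of_even (even_iff_two_dvd.2 hj)

theorem dimerCount_update_pow_mul_le (a : Fin d → ℕ) (j : Fin d) {b q r : ℕ}
    (h : a j = q * b + r) :
    dimerCount d (update a j b) ^ q * dimerCount d (update a j r) ≤ dimerCount d a := by
  induction q generalizing a with
  | zero => rw [zero_mul, zero_add] at h; simp [← h]
  | succ q ih =>
    have hglue := dimerCount_mul_le a j (m := b) (n := q * b + r) (by rw [h]; ring)
    have hrest := ih (update a j (q * b + r)) (by simp)
    simp only [update_idem] at hrest
    calc dimerCount d (update a j b) ^ (q + 1) * dimerCount d (update a j r)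
        = dimerCount d (update a j b) *
            (dimerCount d (update a j b) ^ q * dimerCount d (update a j r)) := by ring
      _ ≤ dimerCount d (update a j b) * dimerCount d (update a j (q * b + r)) := by gcongr
      _ ≤ dimerCount d a := hglue

theorem dimerCount_update_pow_le (a : Fin d → ℕ) (j : Fin d) {b q r : ℕ}
    (h : a j = q * b + r) (hr : Even (∏ i, update a j r i)) :
    dimerCount d (update a j b) ^ q ≤ dimerCount d a :=
  calc dimerCount d (update a j b) ^ q
      ≤ dimerCount d (update a j b) ^ q * dimerCount d (update a j r) :=
        Nat.le_mul_of_pos_right _ (dimerCount_pos hr)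
    _ ≤ dimerCount d a := dimerCount_update_pow_mul_le a j h

theorem pow_prod_le_of_forall_update {F : (Fin d → ℕ) → ℕ} (P : (Fin d → ℕ) → Prop)
    {a b k : Fin d → ℕ} (ha : P a)
    (hstep : ∀ c j, P c → c j = a j → P (update c j (b j)) ∧ F (update c j (b j)) ^ k j ≤ F c) :
    F b ^ ∏ i, k i ≤ F a := by
  classical
  suffices ∀ s : Finset (Fin d), ∀ c, P c → (∀ i ∈ s, c i = a i) → (∀ i ∉ s, c i = b i) →
      F b ^ ∏ i ∈ s, k i ≤ F c from this univ a ha (fun _ _ => rfl) (by simp)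
  intro s
  induction s using Finset.induction_on with
  | empty => intro c _ _ hcb; simp [funext fun i => hcb i (notMem_empty i)]
  | insert x s hx ih =>
    intro c hc hca hcb
    obtain ⟨hc', hstep_x⟩ := hstep c x hc (hca x (mem_insert_self x s))
    have hs := ih (update c x (b x)) hc'
      (fun i hi => by
        rw [update_of_ne (ne_of_mem_of_not_mem hi hx)]; exact hca i (mem_insert_of_mem hi))
      (fun i hi => by
        rcases eq_or_ne i x with rfl | hix
        · simp
        · rw [update_of_ne hix]; exact hcb i (by simp [hix, hi]))
    calc F b ^ ∏ i ∈ insert x s, k i = (F b ^ ∏ i ∈ s, k i) ^ k x := by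
          rw [prod_insert hx, ← pow_mul, mul_comm]
      _ ≤ F (update c x (b x)) ^ k x := Nat.pow_le_pow_left hs _
      _ ≤ F c := hstep_x

theorem even_prod_update_iff {c : Fin d → ℕ} {j : Fin d} {r : ℕ} (h : Even r ↔ Even (c j)) :
    Even (∏ i, update c j r i) ↔ Even (∏ i, c i) := by
  rw [prod_update_of_mem (mem_univ j), prod_eq_mul_prod_sdiff_singleton_of_mem (mem_univ j) c,
    Nat.even_mul, Nat.even_mul, h]

theorem dimerCount_pow_prod_div_le {a b : Fin d → ℕ} (hb : ∀ i, Even (b i))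
    (ha : Even (∏ i, a i)) : dimerCount d b ^ ∏ i, a i / b i ≤ dimerCount d a := by
  refine pow_prod_le_of_forall_update (fun c => Even (∏ i, c i)) ha fun c j hc hcj => ⟨?_, ?_⟩
  · rw [prod_update_of_mem (mem_univ j), Nat.even_mul]
    exact .inl (hb j)
  · refine dimerCount_update_pow_le c j (r := a j % b j) (by rw [hcj, Nat.div_add_mod']) ?_
    -- a remainder modulo the even number `b j` has the parity of `c j`
    refine (even_prod_update_iff ?_).2 hc
    rw [Nat.even_iff, Nat.even_iff, Nat.mod_mod_of_dvd _ (even_iff_two_dvd.1 (hb j)), hcj]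

theorem dimerCount_pow_le_two_mul (b : Fin d → ℕ) :
    dimerCount d b ^ 2 ^ d ≤ dimerCount d (2 * b) := by
  have := pow_prod_le_of_forall_update (F := dimerCount d) (fun _ => True) (a := 2 * b) (b := b)
    (k := fun _ => 2) trivial fun c j _ hcj =>
      ⟨trivial, dimerCount_update_pow_le c j (q := 2) (r := 0) (by simp [hcj])
        (by rw [prod_update_of_mem (mem_univ j), zero_mul]; exact ⟨0, rfl⟩)⟩
  simpa using this

theorem dimerCount_le (a : Fin d → ℕ) : dimerCount d a ≤ (3 ^ d) ^ ∏ i, a i := by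
  have h_step (m : Matchings (GridAdj (a := a))) (x : Cell a) (i : Fin d) :
      (m.1 x i : ℤ) - x i ∈ Icc (-1 : ℤ) 1 := by
    have := single_le_sum (fun i _ => abs_nonneg ((x i : ℤ) - m.1 x i)) (mem_univ i)
    rw [m.2.2 x] at this
    rw [mem_Icc]
    constructor <;> linarith [(abs_le.1 this).1, (abs_le.1 this).2]
  have h_inj : Injective fun (m : Matchings (GridAdj (a := a))) x i =>
      (⟨_, h_step m x i⟩ : Icc (-1 : ℤ) 1) :=
    fun m m' h => Subtype.ext (funext fun x => funext fun i => Fin.ext (by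
      simpa using congrArg Subtype.val (congrFun (congrFun h x) i)))
  calc dimerCount d a ≤ Nat.card (Cell a → Fin d → Icc (-1 : ℤ) 1) :=
        Nat.card_le_card_of_injective _ h_inj
    _ = (3 ^ d) ^ ∏ i, a i := by
        rw [Nat.card_eq_fintype_card, Fintype.card_fun, Fintype.card_fun, card_cell]
        simp

end Tilings

section Entropy

variable {d : ℕ}

theorem log_natCast_le_log_natCast {m n : ℕ} (h : m ≤ n) : Real.log m ≤ Real.log n := by
  rcases Nat.eq_zero_or_pos m with rfl | hm
  · simpa using Real.log_natCast_nonneg n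
  · exact Real.log_le_log (by exact_mod_cast hm) (by exact_mod_cast h)

theorem mul_log_le_log_of_pow_le {m n k : ℕ} (h : m ^ k ≤ n) :
    (k : ℝ) * Real.log m ≤ Real.log n := by
  simpa [Real.log_pow] using log_natCast_le_log_natCast h

noncomputable def dimerEntropy (d : ℕ) (a : Fin d → ℕ) : ℝ :=
  Real.log (dimerCount d a) / ∏ i, (a i : ℝ)

theorem dimerEntropy_nonneg (a : Fin d → ℕ) : 0 ≤ dimerEntropy d a :=
  div_nonneg (Real.log_natCast_nonneg _) (by positivity)

theorem dimerEntropy_le (a : Fin d → ℕ) : dimerEntropy d a ≤ d * Real.log 3 := by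
  rcases (show (0 : ℝ) ≤ ∏ i, (a i : ℝ) by positivity).eq_or_lt with h0 | h0
  · simp only [dimerEntropy, ← h0, div_zero]; positivity
  rw [dimerEntropy, div_le_iff₀ h0]
  calc Real.log (dimerCount d a) ≤ Real.log ((3 ^ d) ^ ∏ i, a i : ℕ) :=
        log_natCast_le_log_natCast (dimerCount_le a)
    _ = d * Real.log 3 * ∏ i, (a i : ℝ) := by push_cast [Real.log_pow]; ring

theorem pos_of_dimerEntropy_pos {a : Fin d → ℕ} (h : 0 < dimerEntropy d a) (i : Fin d) :
    0 < a i :=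
  Nat.pos_of_ne_zero fun hi => h.ne' (by simp [dimerEntropy, prod_eq_zero (mem_univ i), hi])

theorem dimerEntropy_le_two_mul (b : Fin d → ℕ) : dimerEntropy d b ≤ dimerEntropy d (2 * b) := by
  have h := mul_log_le_log_of_pow_le (dimerCount_pow_le_two_mul b)
  push_cast at h
  have hV : ∏ i, ((2 * b) i : ℝ) = 2 ^ d * ∏ i, (b i : ℝ) := by simp [prod_mul_distrib]
  rw [dimerEntropy, dimerEntropy, hV]
  calc Real.log (dimerCount d b) / ∏ i, (b i : ℝ)
      = 2 ^ d * Real.log (dimerCount d b) / (2 ^ d * ∏ i, (b i : ℝ)) := by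
        rw [mul_div_mul_left _ _ (by positivity)]
    _ ≤ _ := div_le_div_of_nonneg_right h (by positivity)

/-- The fraction of the box `a` covered by `∏ i, a i / b i` disjoint translates of `b`. -/
noncomputable def coveredFraction (b a : Fin d → ℕ) : ℝ := ∏ i, ((a i / b i : ℕ) : ℝ) * b i / a i

theorem dimerEntropy_mul_coveredFraction_le {a b : Fin d → ℕ} (hb : ∀ i, Even (b i))
    (ha : Even (∏ i, a i)) : dimerEntropy d b * coveredFraction b a ≤ dimerEntropy d a := by
  have h := mul_log_le_log_of_pow_le (dimerCount_pow_prod_div_le hb ha)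
  rcases eq_or_ne (∏ i, (b i : ℝ)) 0 with h0 | h0
  · simpa [dimerEntropy, h0] using dimerEntropy_nonneg a
  calc dimerEntropy d b * coveredFraction b a
      = ((∏ i, a i / b i : ℕ) : ℝ) * Real.log (dimerCount d b) / ∏ i, (a i : ℝ) := by
        simp only [dimerEntropy, coveredFraction, prod_div_distrib, prod_mul_distrib,
          Nat.cast_prod]
        field_simp
    _ ≤ dimerEntropy d a := div_le_div_of_nonneg_right h (by positivity)

theorem tendsto_coveredFraction {b : Fin d → ℕ} (hb : ∀ i, 0 < b i) :
    Tendsto (coveredFraction b) (pi fun _ => atTop) (𝓝 1) := by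
  have h_factor (i : Fin d) : Tendsto (fun a : Fin d → ℕ => ((a i / b i : ℕ) : ℝ) * b i / a i)
      (pi fun _ => atTop) (𝓝 1) := by
    have hb' : (0 : ℝ) < b i := by exact_mod_cast hb i
    refine (tendsto_nat_floor_div_atTop.comp ((tendsto_natCast_atTop_atTop.atTop_div_const hb').comp
      (tendsto_eval_pi (fun _ => atTop) i))).congr fun a => ?_
    simp [Nat.floor_div_eq_div, div_div_eq_mul_div]
  have := tendsto_finsetProd univ fun i _ => h_factor i
  rwa [prod_const_one] at this

theorem tendsto_dimerEntropy (d : ℕ) :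
    Tendsto (dimerEntropy d) ((pi fun _ : Fin d => atTop) ⊓ 𝓟 {a | Even (∏ i, a i)})
      (𝓝 (sSup (dimerEntropy d '' {a | Even (∏ i, a i)}))) := by
  set S := {a : Fin d → ℕ | Even (∏ i, a i)}
  rcases S.eq_empty_or_nonempty with hS | hS
  · simp [hS]
  have hbdd : BddAbove (dimerEntropy d '' S) :=
    ⟨d * Real.log 3, by rintro _ ⟨a, -, rfl⟩; exact dimerEntropy_le a⟩
  refine tendsto_order.2 ⟨fun l hl => ?_, fun u hu => ?_⟩
  · rcases lt_or_ge l 0 with hl0 | hl0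
    · exact Eventually.of_forall fun a => hl0.trans_le (dimerEntropy_nonneg a)
    obtain ⟨_, ⟨b, -, rfl⟩, hlb⟩ := exists_lt_of_lt_csSup (hS.image _) hl
    have hb : ∀ i, 0 < (2 * b) i := fun i => by
      simpa using pos_of_dimerEntropy_pos (hl0.trans_lt hlb) i
    have hlim := ((tendsto_coveredFraction hb).const_mul (dimerEntropy d (2 * b))).mono_left
      (inf_le_left (b := 𝓟 S))
    rw [mul_one] at hlim
    filter_upwards [hlim.eventually_const_lt (hlb.trans_le (dimerEntropy_le_two_mul b)),
      mem_inf_of_right (mem_principal_self S)] with a hla ha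
    exact hla.trans_le (dimerEntropy_mul_coveredFraction_le (fun i => even_two_mul (b i)) ha)
  · filter_upwards [mem_inf_of_right (mem_principal_self S)] with a ha
    exact (le_csSup hbdd ⟨a, ha, rfl⟩).trans_lt hu

end Entropy

theorem dimer_entropy_exists_general (d : ℕ) :
    ∃ lam : ℝ,
      Tendsto (fun a : Fin d → ℕ => Real.log (dimerCount d a) / ∏ i, (a i : ℝ))
        ((Filter.pi fun _ : Fin d => (atTop : Filter ℕ)) ⊓
          Filter.principal {a | Even (∏ i, a i)})
        (nhds lam) :=
  ⟨_, tendsto_dimerEntropy d⟩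

/-- (Hammersley) For `d ≥ 2` there is a finite constant `λ_d` such that
`(a₁⋯a_d)⁻¹ log f(a₁,…,a_d) → λ_d` as all side lengths tend to infinity through
values of even product. -/
theorem dimer_entropy_exists (d : ℕ) (hd : 2 ≤ d) :
    ∃ lam : ℝ,
      Tendsto (fun a : Fin d → ℕ => Real.log (dimerCount d a) / ∏ i, (a i : ℝ))
        ((Filter.pi fun _ : Fin d => (atTop : Filter ℕ)) ⊓
          Filter.principal {a | Even (∏ i, a i)})
        (nhds lam) :=
  dimer_entropy_exists_general d
end

section
/- (Hammersley–Clifford theorem) Let G = (V, E) be a finite graph, S a finite nonempty set, and μ a strictly positive probability mass function on the configuration space S^V. Then μ satisfies the local Markov property with respect to G — for every vertex v and every configuration, the conditional distribution of the value at v given the values at all other vertices depends only on the values at the neighbours of v — if and only if μ has a Gibbsian representation: there exist strictly positive functions φ_C, one for each clique C of G, each depending only on the restriction of the configuration to C, such that μ(σ) is proportional to ∏_{C clique of G} φ_C(σ restricted to C) for all σ ∈ S^V. -/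
open scoped Classical
open Finset
set_option linter.unusedSectionVars false

section HCaux

variable {V : Type*} [Fintype V] [DecidableEq V] {S : Type*} [Fintype S]

/-- configuration agreeing with σ on A and equal to s₀ elsewhere -/
private def HCrestr (s₀ : S) (A : Finset V) (σ : V → S) : V → S :=
  fun v => if v ∈ A then σ v else s₀

private lemma HCrestr_univ (s₀ : S) (σ : V → S) : HCrestr s₀ Finset.univ σ = σ := by
  funext x; simp [HCrestr]

private lemma HCrestr_congr (s₀ : S) {A C : Finset V} (hAC : A ⊆ C) {σ τ : V → S}
    (h : ∀ v ∈ C, σ v = τ v) : HCrestr s₀ A σ = HCrestr s₀ A τ := by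
  funext x
  simp only [HCrestr]
  split
  · next hx => exact h x (hAC hx)
  · rfl

private lemma update_HCrestr (s₀ : S) (D : Finset V) (σ : V → S) (u : V) :
    Function.update (HCrestr s₀ D σ) u (σ u) = HCrestr s₀ (insert u D) σ := by
  funext x
  by_cases hx : x = u
  · subst hx; simp [HCrestr]
  · simp [Function.update, hx, HCrestr, Finset.mem_insert]

private lemma update_HCrestr_self (s₀ : S) {D : Finset V} {u : V} (hu : u ∉ D) (σ : V → S) :
    Function.update (HCrestr s₀ D σ) u s₀ = HCrestr s₀ D σ := by
  funext x
  by_cases hx : x = u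
  · subst hx; simp [HCrestr, hu]
  · simp [Function.update, hx]

private noncomputable def HCJ (μ : (V → S) → ℝ) (s₀ : S) (σ : V → S) (B : Finset V) : ℝ :=
  Real.log (μ (HCrestr s₀ B σ))

private noncomputable def HCVf (μ : (V → S) → ℝ) (s₀ : S) (σ : V → S) (A : Finset V) : ℝ :=
  ∑ B ∈ A.powerset, (-1 : ℝ) ^ (A.card - B.card) * HCJ μ s₀ σ B

private lemma mobius_inv (f : Finset V → ℝ) (U : Finset V) :
    ∑ A ∈ U.powerset, ∑ B ∈ A.powerset, (-1:ℝ)^(A.card - B.card) * f B = f U := by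
  have hps : ∀ A ∈ U.powerset, A.powerset = U.powerset.filter (· ⊆ A) := by
    intro A hA
    rw [mem_powerset] at hA
    ext B
    simp only [mem_powerset, mem_filter]
    exact ⟨fun h => ⟨h.trans hA, h⟩, fun h => h.2⟩
  calc ∑ A ∈ U.powerset, ∑ B ∈ A.powerset, (-1:ℝ)^(A.card - B.card) * f B
      = ∑ A ∈ U.powerset, ∑ B ∈ U.powerset,
          if B ⊆ A then (-1:ℝ)^(A.card - B.card) * f B else 0 := by
        refine sum_congr rfl fun A hA => ?_
        rw [hps A hA, sum_filter]
    _ = ∑ B ∈ U.powerset, (∑ A ∈ U.powerset,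
          if B ⊆ A then (-1:ℝ)^(A.card - B.card) else 0) * f B := by
        rw [sum_comm]
        refine sum_congr rfl fun B _ => ?_
        rw [sum_mul]
        refine sum_congr rfl fun A _ => ?_
        split <;> simp
    _ = ∑ B ∈ U.powerset, (if B = U then (1:ℝ) else 0) * f B := by
        refine sum_congr rfl fun B hB => ?_
        rw [mem_powerset] at hB
        congr 1
        have : ∑ A ∈ U.powerset, (if B ⊆ A then (-1:ℝ)^(A.card - B.card) else 0)
            = ∑ C ∈ (U \ B).powerset, (-1:ℝ)^C.card := by
          rw [← sum_filter]
          refine sum_nbij' (fun A => A \ B) (fun C => B ∪ C) ?_ ?_ ?_ ?_ ?_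
          · intro A hA
            rw [mem_filter, mem_powerset] at hA
            exact mem_powerset.2 (sdiff_subset_sdiff hA.1 le_rfl)
          · intro C hC
            rw [mem_powerset] at hC
            refine mem_filter.2 ⟨mem_powerset.2
              (union_subset hB (hC.trans sdiff_subset)), subset_union_left⟩
          · intro A hA
            rw [mem_filter] at hA
            exact union_sdiff_of_subset hA.2
          · intro C hC
            rw [mem_powerset] at hC
            exact union_sdiff_cancel_left (disjoint_sdiff.mono_right hC)
          · intro A hA
            rw [mem_filter] at hA
            rw [card_sdiff_of_subset hA.2]
        rw [this]
        have hz := @Finset.sum_powerset_neg_one_pow_card V _ (U \ B)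
        have h2 : ∑ C ∈ (U \ B).powerset, (-1:ℝ)^C.card
            = ((∑ m ∈ (U \ B).powerset, (-1:ℤ)^m.card : ℤ) : ℝ) := by push_cast; ring_nf
        rw [h2, hz]
        by_cases h : B = U
        · simp [h]
        · have : U \ B ≠ ∅ := by
            rw [← nonempty_iff_ne_empty, sdiff_nonempty]
            exact fun hsub => h (le_antisymm hB hsub)
          simp [h, this]
    _ = f U := by
        rw [sum_eq_single U]
        · simp
        · intro B _ hne; simp [hne]
        · intro h; exact absurd (mem_powerset.2 le_rfl) h

variable (G : SimpleGraph V)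

private lemma HC_bracket [Nonempty S] (μ : (V → S) → ℝ) (hpos : ∀ σ, 0 < μ σ)
    (hM : ∀ v : V, ∀ τ τ' : V → S,
        (∀ w, G.Adj v w → τ w = τ' w) →
        ∀ s : S,
          μ (Function.update τ v s) / (∑ s' : S, μ (Function.update τ v s')) =
          μ (Function.update τ' v s) / (∑ s' : S, μ (Function.update τ' v s')))
    (s₀ : S) (σ : V → S) {u w : V} (hne : u ≠ w) (hnadj : ¬ G.Adj u w)
    {D : Finset V} (hu : u ∉ D) (hw : w ∉ D) :
    HCJ μ s₀ σ D - HCJ μ s₀ σ (insert u D) - HCJ μ s₀ σ (insert w D)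
      + HCJ μ s₀ σ (insert u (insert w D)) = 0 := by
  set τ : V → S := HCrestr s₀ D σ with hτ
  set τ' : V → S := HCrestr s₀ (insert w D) σ with hτ'
  have hagree : ∀ x, G.Adj u x → τ x = τ' x := by
    intro x hx
    have hxw : x ≠ w := fun h => hnadj (h ▸ hx)
    simp [hτ, hτ', HCrestr, Finset.mem_insert, hxw]
  have huD' : u ∉ insert w D := by simp [Finset.mem_insert, hne, hu]
  have e1 := hM u τ τ' hagree (σ u)
  have e2 := hM u τ τ' hagree s₀
  rw [update_HCrestr s₀ D σ u, update_HCrestr s₀ (insert w D) σ u] at e1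
  rw [update_HCrestr_self s₀ hu σ, update_HCrestr_self s₀ huD' σ] at e2
  set Z : ℝ := ∑ s' : S, μ (Function.update τ u s') with hZ
  set Z' : ℝ := ∑ s' : S, μ (Function.update τ' u s') with hZ'
  have hZpos : 0 < Z := Finset.sum_pos (fun s _ => hpos _) Finset.univ_nonempty
  have hZ'pos : 0 < Z' := Finset.sum_pos (fun s _ => hpos _) Finset.univ_nonempty
  set a := μ (HCrestr s₀ D σ) with ha
  set b := μ (HCrestr s₀ (insert u D) σ) with hb
  set c := μ (HCrestr s₀ (insert w D) σ) with hc
  set d := μ (HCrestr s₀ (insert u (insert w D)) σ) with hd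
  have hap : 0 < a := hpos _
  have hbp : 0 < b := hpos _
  have hcp : 0 < c := hpos _
  have hdp : 0 < d := hpos _
  -- e1 : b / Z = d / Z', e2 : a / Z = c / Z'
  have key : b * c = a * d := by
    rw [div_eq_div_iff (ne_of_gt hZpos) (ne_of_gt hZ'pos)] at e1 e2
    have h3 : (b * c) * Z' = (a * d) * Z' := by
      calc (b * c) * Z' = (b * Z') * c := by ring
        _ = (d * Z) * c := by rw [e1]
        _ = d * (c * Z) := by ring
        _ = d * (a * Z') := by rw [← e2]
        _ = (a * d) * Z' := by ring
    exact mul_right_cancel₀ (ne_of_gt hZ'pos) h3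
  have hlog : Real.log b + Real.log c = Real.log a + Real.log d := by
    rw [← Real.log_mul (ne_of_gt hbp) (ne_of_gt hcp),
        ← Real.log_mul (ne_of_gt hap) (ne_of_gt hdp), key]
  simp only [HCJ, ← ha, ← hb, ← hc, ← hd]
  linarith

private lemma HCVf_eq_zero [Nonempty S] (μ : (V → S) → ℝ) (hpos : ∀ σ, 0 < μ σ)
    (hM : ∀ v : V, ∀ τ τ' : V → S,
        (∀ w, G.Adj v w → τ w = τ' w) →
        ∀ s : S,
          μ (Function.update τ v s) / (∑ s' : S, μ (Function.update τ v s')) =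
          μ (Function.update τ' v s) / (∑ s' : S, μ (Function.update τ' v s')))
    (s₀ : S) (σ : V → S) {A : Finset V} (hA : ¬ G.IsClique (A : Set V)) :
    HCVf μ s₀ σ A = 0 := by
  rw [SimpleGraph.isClique_iff, Set.Pairwise] at hA
  push_neg at hA
  obtain ⟨u, hu, w, hw, hne, hnadj⟩ := hA
  rw [Finset.mem_coe] at hu hw
  set D₀ : Finset V := (A.erase u).erase w with hD₀
  have huD₀ : u ∉ D₀ := fun h => (Finset.mem_erase.1 (Finset.mem_of_mem_erase h)).1 rfl
  have hwD₀ : w ∉ D₀ := fun h => (Finset.mem_erase.1 h).1 rfl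
  have huwD₀ : u ∉ insert w D₀ := by
    simp only [Finset.mem_insert]
    rintro (h | h)
    · exact hne h
    · exact huD₀ h
  have hAeq : A = insert u (insert w D₀) := by
    rw [hD₀, Finset.insert_erase, Finset.insert_erase hu]
    exact Finset.mem_erase.2 ⟨fun h => hne h.symm, hw⟩
  have hcard : A.card = D₀.card + 2 := by
    rw [hAeq, Finset.card_insert_of_notMem huwD₀,
      Finset.card_insert_of_notMem hwD₀]
  rw [HCVf, hAeq, Finset.sum_powerset_insert huwD₀, Finset.sum_powerset_insert hwD₀,
    Finset.sum_powerset_insert hwD₀]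
  rw [← hAeq]
  have main : ∀ D ∈ D₀.powerset,
      ((-1:ℝ)^(A.card - D.card) * HCJ μ s₀ σ D
        + (-1:ℝ)^(A.card - (insert w D).card) * HCJ μ s₀ σ (insert w D))
      + ((-1:ℝ)^(A.card - (insert u D).card) * HCJ μ s₀ σ (insert u D)
        + (-1:ℝ)^(A.card - (insert u (insert w D)).card) * HCJ μ s₀ σ (insert u (insert w D)))
      = 0 := by
    intro D hD
    rw [Finset.mem_powerset] at hD
    have hwD : w ∉ D := fun h => hwD₀ (hD h)
    have huD : u ∉ D := fun h => huD₀ (hD h)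
    have huwD : u ∉ insert w D := by
      simp only [Finset.mem_insert]
      rintro (h | h)
      · exact hne h
      · exact huD h
    have hcardle : D.card ≤ D₀.card := Finset.card_le_card hD
    have c1 : (insert w D).card = D.card + 1 := Finset.card_insert_of_notMem hwD
    have c2 : (insert u D).card = D.card + 1 := Finset.card_insert_of_notMem huD
    have c3 : (insert u (insert w D)).card = D.card + 2 := by
      rw [Finset.card_insert_of_notMem huwD, c1]
    set m := D₀.card - D.card with hm
    have e0 : A.card - D.card = m + 2 := by omega
    have e1 : A.card - (insert w D).card = m + 1 := by omega
    have e2 : A.card - (insert u D).card = m + 1 := by omega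
    have e3 : A.card - (insert u (insert w D)).card = m := by omega
    rw [e0, e1, e2, e3]
    have hb := HC_bracket G μ hpos hM s₀ σ hne hnadj huD hwD
    have p0 : (-1:ℝ)^(m+2) = (-1:ℝ)^m := by ring
    have p1 : (-1:ℝ)^(m+1) = -(-1:ℝ)^m := by ring
    rw [p0, p1]
    linear_combination ((-1:ℝ)^m) * hb
  calc (∑ D ∈ D₀.powerset, (-1:ℝ)^(A.card - D.card) * HCJ μ s₀ σ D
        + ∑ D ∈ D₀.powerset, (-1:ℝ)^(A.card - (insert w D).card) * HCJ μ s₀ σ (insert w D))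
      + (∑ D ∈ D₀.powerset, (-1:ℝ)^(A.card - (insert u D).card) * HCJ μ s₀ σ (insert u D)
        + ∑ D ∈ D₀.powerset, (-1:ℝ)^(A.card - (insert u (insert w D)).card)
            * HCJ μ s₀ σ (insert u (insert w D)))
      = ∑ D ∈ D₀.powerset,
          (((-1:ℝ)^(A.card - D.card) * HCJ μ s₀ σ D
            + (-1:ℝ)^(A.card - (insert w D).card) * HCJ μ s₀ σ (insert w D))
          + ((-1:ℝ)^(A.card - (insert u D).card) * HCJ μ s₀ σ (insert u D)
            + (-1:ℝ)^(A.card - (insert u (insert w D)).card)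
                * HCJ μ s₀ σ (insert u (insert w D)))) := by
        rw [Finset.sum_add_distrib, Finset.sum_add_distrib, Finset.sum_add_distrib]
    _ = 0 := Finset.sum_eq_zero main

end HCaux

/-- (Hammersley–Clifford theorem) Let `G` be a finite graph, `S` a finite
nonempty set, and `μ` a strictly positive probability mass function on `S^V`.
Then `μ` satisfies the local Markov property with respect to `G` if and only if
`μ` has a Gibbsian representation as a normalized product, over the cliques `C`
of `G`, of strictly positive functions depending only on the restriction of the
configuration to `C`. -/
theorem hammersley_clifford
    {V : Type*} [Fintype V] [DecidableEq V] (G : SimpleGraph V)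
    {S : Type*} [Fintype S] [Nonempty S]
    (μ : (V → S) → ℝ)
    (hpos : ∀ σ, 0 < μ σ)
    (hsum : ∑ σ : V → S, μ σ = 1) :
    -- local Markov property: the conditional distribution at `v` given the rest
    -- depends only on the values at the neighbours of `v`
    (∀ v : V, ∀ τ τ' : V → S,
        (∀ w, G.Adj v w → τ w = τ' w) →
        ∀ s : S,
          μ (Function.update τ v s) / (∑ s' : S, μ (Function.update τ v s')) =
          μ (Function.update τ' v s) / (∑ s' : S, μ (Function.update τ' v s')))
    ↔
    -- Gibbsian representation
    (∃ φ : Finset V → (V → S) → ℝ,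
      (∀ C : Finset V, G.IsClique (C : Set V) → ∀ σ, 0 < φ C σ) ∧
      (∀ C : Finset V, G.IsClique (C : Set V) → ∀ σ τ : V → S,
        (∀ v ∈ C, σ v = τ v) → φ C σ = φ C τ) ∧
      ∃ c : ℝ, 0 < c ∧ ∀ σ : V → S,
        μ σ = c * ∏ C ∈ Finset.univ.filter
            (fun C : Finset V => G.IsClique (C : Set V)), φ C σ) := by
  constructor
  · -- forward: Markov ⇒ Gibbs
    intro hM
    obtain ⟨s₀⟩ := ‹Nonempty S›
    refine ⟨fun C σ => if G.IsClique (C : Set V) then Real.exp (HCVf μ s₀ σ C) else 1,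
      ?_, ?_, 1, one_pos, ?_⟩
    · intro C hC σ
      simp only [if_pos hC]
      exact Real.exp_pos _
    · intro C hC σ τ h
      simp only [if_pos hC]
      congr 1
      unfold HCVf
      refine Finset.sum_congr rfl fun B hB => ?_
      rw [Finset.mem_powerset] at hB
      unfold HCJ
      rw [HCrestr_congr s₀ hB h]
    · intro σ
      rw [one_mul]
      have hlog : Real.log (μ σ) = ∑ A ∈ (Finset.univ : Finset V).powerset, HCVf μ s₀ σ A := by
        have := mobius_inv (f := HCJ μ s₀ σ) (U := (Finset.univ : Finset V))
        rw [HCJ, HCrestr_univ] at this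
        rw [← this]
        rfl
      have hfilter : ∑ A ∈ (Finset.univ : Finset V).powerset, HCVf μ s₀ σ A
          = ∑ A ∈ Finset.univ.filter (fun C : Finset V => G.IsClique (C : Set V)),
              HCVf μ s₀ σ A := by
        rw [Finset.powerset_univ]
        refine (Finset.sum_filter_of_ne ?_).symm
        intro A _ hne
        by_contra hnc
        exact hne (HCVf_eq_zero G μ hpos hM s₀ σ hnc)
      have : μ σ = Real.exp (Real.log (μ σ)) := (Real.exp_log (hpos σ)).symm
      rw [this, hlog, hfilter, Real.exp_sum]
      refine Finset.prod_congr rfl fun C hC => ?_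
      exact (if_pos (Finset.mem_filter.1 hC).2).symm
  · -- backward: Gibbs ⇒ Markov
    intro ⟨φ, hφpos, hφloc, c, hc, hrep⟩
    intro v τ τ' hagree s
    set Q := Finset.univ.filter (fun C : Finset V => G.IsClique (C : Set V)) with hQ
    set Qv := Q.filter (fun C => v ∈ C) with hQv
    set Qn := Q.filter (fun C => v ∉ C) with hQn
    have hclique : ∀ C ∈ Q, G.IsClique (C : Set V) := fun C hC => (Finset.mem_filter.1 hC).2
    -- for C not containing v, φ C (update ρ v s) = φ C ρ
    have hnv : ∀ ρ : V → S, ∀ s : S, ∀ C ∈ Qn, φ C (Function.update ρ v s) = φ C ρ := by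
      intro ρ s C hC
      rw [hQn, Finset.mem_filter] at hC
      refine hφloc C (hclique C hC.1) _ _ fun x hx => ?_
      have : x ≠ v := fun h => hC.2 (h ▸ hx)
      simp [Function.update, this]
    -- for C containing v (clique), update τ v s and update τ' v s agree on C
    have hv : ∀ s : S, ∀ C ∈ Qv,
        φ C (Function.update τ v s) = φ C (Function.update τ' v s) := by
      intro s C hC
      rw [hQv, Finset.mem_filter] at hC
      refine hφloc C (hclique C hC.1) _ _ fun x hx => ?_
      by_cases hxv : x = v
      · subst hxv; simp
      · have hadj : G.Adj v x := by
          refine hclique C hC.1 ?_ ?_ (fun h => hxv h.symm)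
          · exact hC.2
          · exact hx
        simp [Function.update, hxv, hagree x hadj]
    -- factor μ
    have hfac : ∀ ρ : V → S, ∀ s : S,
        μ (Function.update ρ v s)
          = (c * ∏ C ∈ Qn, φ C ρ) * ∏ C ∈ Qv, φ C (Function.update ρ v s) := by
      intro ρ s
      rw [hrep]
      rw [← Finset.prod_filter_mul_prod_filter_not Q (fun C => v ∈ C)]
      rw [← hQv, ← hQn]
      have : ∏ C ∈ Qn, φ C (Function.update ρ v s) = ∏ C ∈ Qn, φ C ρ :=
        Finset.prod_congr rfl fun C hC => hnv ρ s C hC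
      rw [this]; ring
    have hKpos : ∀ ρ : V → S, 0 < c * ∏ C ∈ Qn, φ C ρ := by
      intro ρ
      exact mul_pos hc (Finset.prod_pos fun C hC =>
        hφpos C (hclique C (Finset.mem_filter.1 hC).1) ρ)
    have hA : ∀ s : S, ∏ C ∈ Qv, φ C (Function.update τ v s)
        = ∏ C ∈ Qv, φ C (Function.update τ' v s) :=
      fun s => Finset.prod_congr rfl fun C hC => hv s C hC
    rw [hfac τ s, hfac τ' s]
    have hsum1 : ∑ s' : S, μ (Function.update τ v s')
        = (c * ∏ C ∈ Qn, φ C τ) * ∑ s' : S, ∏ C ∈ Qv, φ C (Function.update τ v s') := by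
      rw [Finset.mul_sum]
      exact Finset.sum_congr rfl fun s' _ => hfac τ s'
    have hsum2 : ∑ s' : S, μ (Function.update τ' v s')
        = (c * ∏ C ∈ Qn, φ C τ') * ∑ s' : S, ∏ C ∈ Qv, φ C (Function.update τ' v s') := by
      rw [Finset.mul_sum]
      exact Finset.sum_congr rfl fun s' _ => hfac τ' s'
    rw [hsum1, hsum2, hA s]
    have hAsum : ∑ s' : S, ∏ C ∈ Qv, φ C (Function.update τ v s')
        = ∑ s' : S, ∏ C ∈ Qv, φ C (Function.update τ' v s') :=
      Finset.sum_congr rfl fun s' _ => hA s'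
    rw [hAsum]
    rw [mul_div_mul_left _ _ (ne_of_gt (hKpos τ)), mul_div_mul_left _ _ (ne_of_gt (hKpos τ'))]
end

section
/- (Hammersley, estimation with integer-restricted parameters) Let σ > 0 and let x₁, …, x_n be real numbers with sample mean x̄ = (x₁ + ⋯ + x_n)/n. For m ∈ ℤ define the normal likelihood L(m) = ∏_{i=1}^{n} (σ√(2π))^{-1} exp(−(x_i − m)²/(2σ²)). Then an integer m maximizes L over ℤ if and only if |m − x̄| = min_{k ∈ ℤ} |k − x̄|; that is, the maximum likelihood estimator of an integer-valued normal mean with known variance is the integer nearest to the sample mean. -/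
/-!
The log-likelihood of a normal sample is, up to a constant and a negative factor, the sum of
squared deviations `∑ (xᵢ - m)²`, and this sum equals `∑ (xᵢ - x̄)² + n (m - x̄)²`. Hence
maximizing the likelihood over any set of candidate means, in particular over `ℤ`, amounts to
minimizing `|m - x̄|`.
-/

open Real Finset

section

variable {ι : Type*} [Fintype ι]

theorem sum_sub_sq_eq_sum_sub_mean_sq_add (x : ι → ℝ) (a : ℝ) :
    ∑ i, (x i - a) ^ 2 =
      ∑ i, (x i - (∑ j, x j) / Fintype.card ι) ^ 2 +
        Fintype.card ι * (a - (∑ j, x j) / Fintype.card ι) ^ 2 := by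
  set N : ℝ := (Fintype.card ι : ℝ)
  set S := ∑ j, x j
  have hexpand : ∀ b : ℝ, ∑ i, (x i - b) ^ 2 = ∑ i, x i ^ 2 - 2 * b * S + N * b ^ 2 := by
    intro b
    simp only [sub_sq, sum_add_distrib, sum_sub_distrib, sum_const, card_univ, nsmul_eq_mul,
      ← sum_mul, ← mul_sum, N, S]
    ring
  rw [hexpand, hexpand]
  rcases eq_or_ne N 0 with hN | hN
  · have : IsEmpty ι := Fintype.card_eq_zero_iff.mp (Nat.cast_eq_zero.mp hN)
    simp [S, hN]
  · field_simp
    ring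

theorem sum_sub_sq_le_sum_sub_sq_iff [Nonempty ι] (x : ι → ℝ) (a b : ℝ) :
    ∑ i, (x i - a) ^ 2 ≤ ∑ i, (x i - b) ^ 2 ↔
      |a - (∑ j, x j) / Fintype.card ι| ≤ |b - (∑ j, x j) / Fintype.card ι| := by
  rw [sum_sub_sq_eq_sum_sub_mean_sq_add x a, sum_sub_sq_eq_sum_sub_mean_sq_add x b,
    add_le_add_iff_left, mul_le_mul_iff_right₀ (by exact_mod_cast Fintype.card_pos), sq_le_sq]

theorem prod_mul_exp_neg_sq_div (x : ι → ℝ) (c a v : ℝ) :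
    ∏ i, c * exp (-(x i - a) ^ 2 / v) = c ^ Fintype.card ι * exp (-(∑ i, (x i - a) ^ 2) / v) := by
  rw [prod_mul_distrib, prod_const, card_univ, ← exp_sum, ← sum_div, sum_neg_distrib]

theorem prod_mul_exp_neg_sq_div_le_iff {c v : ℝ} (hc : 0 < c) (hv : 0 < v) (x : ι → ℝ)
    (a b : ℝ) :
    ∏ i, c * exp (-(x i - a) ^ 2 / v) ≤ ∏ i, c * exp (-(x i - b) ^ 2 / v) ↔
      ∑ i, (x i - b) ^ 2 ≤ ∑ i, (x i - a) ^ 2 := by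
  rw [prod_mul_exp_neg_sq_div, prod_mul_exp_neg_sq_div, mul_le_mul_iff_right₀ (by positivity),
    exp_le_exp, div_le_div_iff_of_pos_right hv, neg_le_neg_iff]

end

/-- (Hammersley, estimation with integer-restricted parameters) For a normal
likelihood with known variance `σ²`, an integer `m` maximizes the likelihood
over `ℤ` if and only if `m` is an integer nearest to the sample mean. -/
theorem integer_mle_nearest_integer
    (n : ℕ) (hn : 0 < n) (x : Fin n → ℝ) (σ : ℝ) (hσ : 0 < σ) (m : ℤ) :
    (∀ k : ℤ,
        (∏ i, (σ * Real.sqrt (2 * π))⁻¹ * Real.exp (-(x i - (k : ℝ)) ^ 2 / (2 * σ ^ 2))) ≤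
        (∏ i, (σ * Real.sqrt (2 * π))⁻¹ * Real.exp (-(x i - (m : ℝ)) ^ 2 / (2 * σ ^ 2))))
    ↔
    (∀ k : ℤ,
        |(m : ℝ) - (∑ i, x i) / n| ≤ |(k : ℝ) - (∑ i, x i) / n|) := by
  have : NeZero n := ⟨hn.ne'⟩
  refine forall_congr' fun k => ?_
  rw [prod_mul_exp_neg_sq_div_le_iff (by positivity) (by positivity),
    sum_sub_sq_le_sum_sub_sq_iff, Fintype.card_fin]
end

section
/- (Farahat–Mirsky refinement of Birkhoff's theorem) Every n × n doubly stochastic real matrix can be written as a convex combination of at most n² − 2n + 2 permutation matrices. -/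
open Matrix Finset Module

namespace FarahatMirskyAux

/-- The submodule of matrices all of whose row and column sums vanish. -/
def zeroSums (n : ℕ) : Submodule ℝ (Matrix (Fin n) (Fin n) ℝ) where
  carrier := {A | (∀ i, ∑ j, A i j = 0) ∧ (∀ j, ∑ i, A i j = 0)}
  add_mem' := by
    rintro A B ⟨hA1, hA2⟩ ⟨hB1, hB2⟩
    constructor <;> intro i <;>
      simp [Matrix.add_apply, Finset.sum_add_distrib, hA1 i, hA2 i, hB1 i, hB2 i]
  zero_mem' := by constructor <;> intro i <;> simp
  smul_mem' := by
    rintro c A ⟨h1, h2⟩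
    constructor <;> intro i <;>
      simp [Matrix.smul_apply, ← Finset.mul_sum, h1 i, h2 i]

/-- Restriction of a matrix to its top-left `m × m` block, as a linear map. -/
def restrict (m : ℕ) :
    Matrix (Fin (m + 1)) (Fin (m + 1)) ℝ →ₗ[ℝ] Matrix (Fin m) (Fin m) ℝ where
  toFun A := Matrix.of fun i j => A i.castSucc j.castSucc
  map_add' := by intros; ext; simp
  map_smul' := by intros; ext; simp

lemma restrict_inj {m : ℕ} {A : Matrix (Fin (m + 1)) (Fin (m + 1)) ℝ}
    (hA : A ∈ zeroSums (m + 1)) (h0 : restrict m A = 0) : A = 0 := by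
  have hblock : ∀ i j : Fin m, A i.castSucc j.castSucc = 0 := by
    intro i j
    have := congrFun (congrFun h0 i) j
    simpa [restrict] using this
  have hlastcol : ∀ i : Fin m, A i.castSucc (Fin.last m) = 0 := by
    intro i
    have := hA.1 i.castSucc
    rw [Fin.sum_univ_castSucc] at this
    simpa [hblock] using this
  have hlastrow : ∀ j : Fin m, A (Fin.last m) j.castSucc = 0 := by
    intro j
    have := hA.2 j.castSucc
    rw [Fin.sum_univ_castSucc] at this
    simpa [hblock] using this
  have hcorner : A (Fin.last m) (Fin.last m) = 0 := by
    have := hA.1 (Fin.last m)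
    rw [Fin.sum_univ_castSucc] at this
    simpa [hlastrow] using this
  ext i j
  induction i using Fin.lastCases with
  | last =>
      induction j using Fin.lastCases with
      | last => simpa using hcorner
      | cast j => simpa using hlastrow j
  | cast i =>
      induction j using Fin.lastCases with
      | last => simpa using hlastcol i
      | cast j => simpa using hblock i j

/-- An affinely independent family of matrices whose row and column sums are all `1`
has at most `m * m + 1` members. -/
lemma card_le_of_affineIndependent {m k : ℕ}
    (p : Fin k → Matrix (Fin (m + 1)) (Fin (m + 1)) ℝ)
    (hai : AffineIndependent ℝ p)
    (hrow : ∀ i r, ∑ j, p i r j = 1) (hcol : ∀ i c, ∑ r, p i r c = 1) :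
    k ≤ m * m + 1 := by
  rcases Nat.eq_zero_or_pos k with hk | hk
  · omega
  set i0 : Fin k := ⟨0, hk⟩
  rw [affineIndependent_iff_linearIndependent_vsub ℝ p i0] at hai
  have hmem : ∀ i : {x // x ≠ i0}, p ↑i -ᵥ p i0 ∈ zeroSums (m + 1) := by
    intro i
    constructor <;> intro r <;>
      simp [vsub_eq_sub, Matrix.sub_apply, Finset.sum_sub_distrib, hrow, hcol]
  have hdisj : Disjoint
      (Submodule.span ℝ (Set.range fun i : {x // x ≠ i0} => p ↑i -ᵥ p i0))
      (LinearMap.ker (restrict m)) := by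
    rw [Submodule.disjoint_def]
    intro A hA hker
    have hAz : A ∈ zeroSums (m + 1) :=
      Submodule.span_le.2 (by rintro _ ⟨i, rfl⟩; exact hmem i) hA
    exact restrict_inj hAz (LinearMap.mem_ker.1 hker)
  have hli := hai.map hdisj
  have hcard := hli.fintype_card_le_finrank
  rw [Module.finrank_matrix] at hcard
  simp only [Fintype.card_fin, finrank_self, mul_one] at hcard
  have : Fintype.card {x : Fin k // x ≠ i0} = k - 1 := by
    rw [Fintype.card_subtype_compl]
    simp
  omega

end FarahatMirskyAux

open FarahatMirskyAux in
/-- (Farahat–Mirsky refinement of Birkhoff's theorem) Every `n × n` doubly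
stochastic real matrix is a convex combination of at most `n² - 2n + 2`
permutation matrices. -/
theorem farahat_mirsky
    (n : ℕ) (M : Matrix (Fin n) (Fin n) ℝ)
    (hnonneg : ∀ i j, 0 ≤ M i j)
    (hrow : ∀ i, ∑ j, M i j = 1)
    (hcol : ∀ j, ∑ i, M i j = 1) :
    ∃ (k : ℕ) (σ : Fin k → Equiv.Perm (Fin n)) (w : Fin k → ℝ),
      (k : ℤ) ≤ (n : ℤ) ^ 2 - 2 * n + 2 ∧
      (∀ i, 0 ≤ w i) ∧ (∑ i, w i = 1) ∧
      M = ∑ i, w i • Matrix.of (fun a b => if σ i a = b then (1 : ℝ) else 0) := by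
  cases n with
  | zero =>
      exact ⟨1, fun _ => 1, fun _ => 1, by norm_num, fun _ => zero_le_one, by simp,
        Subsingleton.elim _ _⟩
  | succ m =>
      have hM : M ∈ doublyStochastic ℝ (Fin (m + 1)) :=
        mem_doublyStochastic_iff_sum.2 ⟨hnonneg, hrow, hcol⟩
      have hM' : M ∈ convexHull ℝ {x | ∃ σ : Equiv.Perm (Fin (m + 1)), σ.permMatrix ℝ = x} := by
        rw [← doublyStochastic_eq_convexHull_permMatrix]; exact hM
      obtain ⟨ι, hι, z, w, hzs, hai, hw0, hw1, hwz⟩ :=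
        eq_pos_convex_span_of_mem_convexHull hM'
      choose σ hσ using fun i => hzs (Set.mem_range_self i)
      set k := Fintype.card ι with hkdef
      let e : Fin k ≃ ι := (Fintype.equivFin ι).symm
      have hz : ∀ i, Matrix.of (fun a b => if σ i a = b then (1 : ℝ) else 0) = z i := by
        intro i
        rw [← hσ i]
        ext a b
        simp [Equiv.Perm.permMatrix, PEquiv.toMatrix_apply, Equiv.toPEquiv, Matrix.one_apply, eq_comm]
      have hzrow : ∀ i r, ∑ j, z i r j = 1 := by
        intro i r
        rw [← hσ i]
        exact sum_row_of_mem_doublyStochastic permMatrix_mem_doublyStochastic r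
      have hzcol : ∀ i c, ∑ r, z i r c = 1 := by
        intro i c
        rw [← hσ i]
        exact sum_col_of_mem_doublyStochastic permMatrix_mem_doublyStochastic c
      have hkb : k ≤ m * m + 1 :=
        card_le_of_affineIndependent (fun i => z (e i))
          (hai.comp_embedding e.toEmbedding) (fun i => hzrow (e i)) (fun i => hzcol (e i))
      refine ⟨k, fun i => σ (e i), fun i => w (e i), ?_, fun i => (hw0 (e i)).le, ?_, ?_⟩
      · have : (k : ℤ) ≤ (m : ℤ) * m + 1 := by exact_mod_cast hkb
        push_cast
        nlinarith [this]
      · rw [Equiv.sum_comp e w, hw1]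
      · rw [← hwz, ← Equiv.sum_comp e (fun i => w i • z i)]
        exact Finset.sum_congr rfl fun i _ => by rw [hz (e i)]
end
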